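/- arXiv:2305.13569 — 7 statements merged into one kernel-verified Lean document; each statement's English description precedes it below -/
import Mathlib

section
/- Let G be a finite connected multigraph with spanning tree T0. Then det(Mesh(G,T0)) = ST(G), the total number of spanning trees of G; in particular det(Mesh(G,T0)) is independent of the choice of spanning tree T0 and of the choices of edge directions. -/
open scoped Classical
open Polynomial BigOperators Matrix

namespace Mesh

variable {V E : Type}

/-- One undirected step between vertices along an edge in `S`. -/
def Step (src tgt : E → V) (S : Finset E) (a b : V) : Prop :=
  ∃ e ∈ S, (src e = a ∧ tgt e = b) ∨ (src e = b ∧ tgt e = a)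

/-- Reachability within the subgraph with edge set `S`. -/
def Reach (src tgt : E → V) (S : Finset E) (a b : V) : Prop :=
  Relation.EqvGen (Step src tgt S) a b

/-- The spanning subgraph with edge set `S` is connected. -/
def ConnectedVia (src tgt : E → V) (S : Finset E) : Prop :=
  ∀ a b : V, Reach src tgt S a b

/-- `S` is the edge set of a spanning tree: connected and `|V| - 1` edges. -/
def IsSpanningTree [Fintype V] (src tgt : E → V) (S : Finset E) : Prop :=
  ConnectedVia src tgt S ∧ S.card + 1 = Fintype.card V

/-- Number of spanning trees of the multigraph `(V, E, src, tgt)`. -/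
noncomputable def ST [Fintype V] (src tgt : E → V) : ℕ :=
  Nat.card {S : Finset E // IsSpanningTree src tgt S}

/-- `ST_j(G, T0)`: number of spanning trees having exactly `j` edges outside `T0`. -/
noncomputable def STj [Fintype V] [DecidableEq E] (src tgt : E → V) (T0 : Finset E) (j : ℕ) : ℕ :=
  Nat.card {S : Finset E // IsSpanningTree src tgt S ∧ (S \ T0).card = j}

/-- Boundary of an integral 1-chain. -/
def bdry [Fintype E] [DecidableEq V] (src tgt : E → V) (c : E → ℤ) : V → ℤ :=
  fun v => ∑ e, c e * ((if tgt e = v then 1 else 0) - (if src e = v then 1 else 0))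

/-- The fundamental cycle `Z[j] = e_j + D(e_j)`. -/
def Zchain [DecidableEq E] (T0 : Finset E) (D : {e : E // e ∉ T0} → E → ℤ)
    (j : {e : E // e ∉ T0}) : E → ℤ :=
  fun e => (if e = (j : E) then 1 else 0) + D j e

/-- `D` assigns to each non-tree edge the (unique) chain supported in the tree `T0`
making `Z[j] = e_j + D(e_j)` a cycle; for a spanning tree this characterizes the
signed sum of edges of the tree path from the head to the tail of `e_j`. -/
def IsPathData [Fintype V] [Fintype E] [DecidableEq V] [DecidableEq E]
    (src tgt : E → V) (T0 : Finset E) (D : {e : E // e ∉ T0} → E → ℤ) : Prop :=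
  (∀ j f, D j f ≠ 0 → f ∈ T0) ∧ ∀ j, bdry src tgt (Zchain T0 D j) = 0

/-- The mesh matrix `Mesh(G,T0)` with entries `⟨Z[j₁], Z[j₂]⟩`. -/
noncomputable def MeshM [Fintype E] [DecidableEq E] (T0 : Finset E)
    (D : {e : E // e ∉ T0} → E → ℤ) :
    Matrix {e : E // e ∉ T0} {e : E // e ∉ T0} ℤ :=
  Matrix.of fun j₁ j₂ => ∑ e, Zchain T0 D j₁ e * Zchain T0 D j₂ e

/-- The matrix `Y` of the map `D` in the edge bases. -/
noncomputable def Ymat [DecidableEq E] (T0 : Finset E) (D : {e : E // e ∉ T0} → E → ℤ) :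
    Matrix {f : E // f ∈ T0} {e : E // e ∉ T0} ℤ :=
  Matrix.of fun k j => D j (k : E)

/-- The Kirchhoff Laplacian `Deg - Adj` of a multigraph. -/
noncomputable def LapDegAdj {V' E' : Type} [Fintype E'] [DecidableEq V'] (s t : E' → V') :
    Matrix V' V' ℤ :=
  Matrix.of fun a b =>
    (if a = b then
        ((Finset.univ.filter fun e => s e = a).card + (Finset.univ.filter fun e => t e = a).card : ℤ)
      else 0)
    - ((Finset.univ.filter fun e => (s e = a ∧ t e = b) ∨ (s e = b ∧ t e = a)).card : ℤ)

/-- The incidence coefficient of vertex `v` in `∂e`. -/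
def inc [DecidableEq V] (src tgt : E → V) (e : E) (v : V) : ℤ :=
  (if tgt e = v then 1 else 0) - (if src e = v then 1 else 0)

/-- Source map of the cone `C'(H)`: vertices `Option V` (with `none = W`),
edges `E ⊕ V` (`inl` the edges of `H`, `inr P` the cone edge `P → W`). -/
def coneSrc (src : E → V) : E ⊕ V → Option V
  | Sum.inl e => some (src e)
  | Sum.inr p => some p

/-- Target map of the cone `C'(H)`. -/
def coneTgt (tgt : E → V) : E ⊕ V → Option V
  | Sum.inl e => some (tgt e)
  | Sum.inr _ => none

/-- The edge set of the cone subgraph `C(V(H))` of `C'(H)`. -/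
noncomputable def coneTree (E V : Type) [Fintype E] [Fintype V] : Finset (E ⊕ V) :=
  Finset.univ.filter fun x => x.isRight = true

/-- The tree chain `D(e) = (Q → W) - (P → W)` for the pair `(C'(H), C(V(H)))`. -/
def coneD [DecidableEq V] [DecidableEq E] (src tgt : E → V) (e : E) : E ⊕ V → ℤ :=
  fun x => (if x = Sum.inr (tgt e) then 1 else 0) - (if x = Sum.inr (src e) then 1 else 0)

/-- The boundary map as a homomorphism of abelian groups. -/
noncomputable def bdryHom [Fintype E] [DecidableEq V] (src tgt : E → V) :
    (E → ℤ) →+ (V → ℤ) where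
  toFun := bdry src tgt
  map_zero' := by funext v; simp [bdry]
  map_add' := by
    intro a b
    funext v
    simp [bdry, add_mul, Finset.sum_add_distrib]

/-- `Π ∘ ∂*` : the composition of the coboundary with the identification `Π`. -/
noncomputable def cobdryHom (src tgt : E → V) : (V → ℤ) →+ (E → ℤ) where
  toFun := fun g e => g (tgt e) - g (src e)
  map_zero' := by funext e; simp
  map_add' := by
    intro a b
    funext e
    simp only [Pi.add_apply]
    ring

/-- The reachability setoid of the spanning subgraph with edge set `F`. -/
def reachSetoid (src tgt : E → V) (F : Finset E) : Setoid V :=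
  ⟨Relation.EqvGen (Step src tgt F), Relation.EqvGen.is_equivalence _⟩

/-- Number of connected components of the spanning subgraph with edge set `F`. -/
noncomputable def ncomp (src tgt : E → V) (F : Finset E) : ℕ :=
  Nat.card (Quotient (reachSetoid src tgt F))

/-- `F` is (the edge set of) a spanning forest. -/
def IsSpForest [Fintype V] (src tgt : E → V) (F : Finset E) : Prop :=
  F.card + ncomp src tgt F = Fintype.card V

/-- `mult(F)`: the product of the numbers of vertices of the components of `F`. -/
noncomputable def multF (src tgt : E → V) (F : Finset E) : ℕ :=
  ∏ᶠ q : Quotient (reachSetoid src tgt F),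
    Nat.card {v : V // Quotient.mk (reachSetoid src tgt F) v = q}

/-- `(F, R)` is a rooted spanning forest: `R` has exactly one root in each component. -/
def IsRootedSF [Fintype V] (src tgt : E → V) (F : Finset E) (R : Finset V) : Prop :=
  IsSpForest src tgt F ∧
    ∀ v : V, ∃! u : V, u ∈ R ∧ Relation.EqvGen (Step src tgt F) u v

/-- The polynomial `ST(G,H)(X) = Σ_{j=0}^{N} (-1)^j ST_j(G,H) X^{N-j}`, `N = |E(G)-E(H)|`. -/
noncomputable def STpoly [Fintype V] [Fintype E] [DecidableEq E] (src tgt : E → V)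
    (HE : Finset E) : Polynomial ℤ :=
  ∑ j ∈ Finset.range (HEᶜ.card + 1),
    Polynomial.C ((-1 : ℤ) ^ j * (STj src tgt HE j : ℤ)) * Polynomial.X ^ (HEᶜ.card - j)

/-- The vertex map of the contraction `G/e₀`: `src e₀` is identified with `tgt e₀`. -/
def contrV [DecidableEq V] (src tgt : E → V) (e0 : E) (h : src e0 ≠ tgt e0) (v : V) :
    {w : V // w ≠ src e0} :=
  if hv : v = src e0 then ⟨tgt e0, Ne.symm h⟩ else ⟨v, hv⟩

/-- Source of a directed edge `(e, b)` (`b = true`: the chosen direction). -/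
def dsrc (src tgt : E → V) (x : E × Bool) : V := if x.2 then src x.1 else tgt x.1

/-- Target of a directed edge `(e, b)`. -/
def dtgt (src tgt : E → V) (x : E × Bool) : V := if x.2 then tgt x.1 else src x.1

/-- A non-tree edge is of type 3 when its tree path has length ≥ 2. -/
noncomputable def Type3 [Fintype E] (T0 : Finset E) (D : {e : E // e ∉ T0} → E → ℤ)
    (j : {e : E // e ∉ T0}) : Prop :=
  2 ≤ (Finset.univ.filter fun f => D j f ≠ 0).card


/-!
Let `Z` be the `E × N` integer matrix whose columns are the fundamental cycles `Z[j]`, so that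
`Mesh = Zᵀ Z`. By the Cauchy–Binet formula, `det Mesh = ∑ det (Z_S) ^ 2` over the sets `S` of `N`
edges, `Z_S` being the rows of `Z` indexed by `S`. A cycle is determined by its values off a
spanning tree, so if `T = Sᶜ` is a spanning tree, the fundamental cycles of `T` and of `T0` are
integral combinations of each other, `Z_S` is invertible over `ℤ` and `det (Z_S) ^ 2 = 1`.
Otherwise `T` has `|V| - 1` edges but is disconnected, and the coboundary of the indicator of one
of its components is a nonzero vector supported on `S` and orthogonal to every cycle, so
`det Z_S = 0`.
-/

section CauchyBinet

open Finset Equiv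

variable {R : Type*} [CommRing R] {n m : Type*} [Fintype n] [DecidableEq n]

theorem det_mul_eq_sum_fun [Fintype m] (A : Matrix n m R) (B : Matrix m n R) :
    (A * B).det = ∑ p : n → m, (A.submatrix id p).det * ∏ i, B (p i) i := by
  simp only [det_apply', mul_apply, prod_univ_sum, mul_sum, Fintype.piFinset_univ, sum_mul,
    submatrix_apply, id, prod_mul_distrib, mul_assoc]
  exact sum_comm

theorem sum_perm_det_submatrix_comp (A : Matrix n m R) (B : Matrix m n R) (f : n → m) :
    ∑ τ : Perm n, (A.submatrix id (f ∘ τ)).det * ∏ i, B (f (τ i)) i =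
      (A.submatrix id f).det * (B.submatrix f id).det := by
  simp_rw [det_apply' (B.submatrix f id), mul_sum, submatrix_apply, id]
  refine sum_congr rfl fun τ _ => ?_
  rw [show A.submatrix id (f ∘ τ) = (A.submatrix id f).submatrix id τ from rfl, det_permute']
  ring

theorem sum_injective_image_eq [Fintype m] [DecidableEq m] (f : (n → m) → R) {S : Finset m}
    (e : n ≃ S) :
    ∑ p with p.Injective ∧ univ.image p = S, f p = ∑ τ : Perm n, f (fun i => e (τ i)) := by
  symm
  refine sum_bij (fun τ _ i => e (τ i)) (fun τ _ => ?_) (fun τ₁ _ τ₂ _ h => ?_) (fun p hp => ?_)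
    (fun _ _ => rfl)
  · refine mem_filter.2 ⟨mem_univ _, fun a b hab => by simpa using hab, ?_⟩
    ext x
    simp only [mem_image, mem_univ, true_and]
    exact ⟨by rintro ⟨i, rfl⟩; exact (e (τ i)).2,
      fun hx => ⟨τ.symm (e.symm ⟨x, hx⟩), by simp⟩⟩
  · ext i
    simpa using congrFun h i
  · obtain ⟨hinj, himg⟩ := (mem_filter.1 hp).2
    have hmem (i : n) : p i ∈ S := himg ▸ mem_image_of_mem p (mem_univ i)
    have hτ : Function.Injective fun i => e.symm ⟨p i, hmem i⟩ := fun a b hab =>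
      hinj (by simpa using hab)
    exact ⟨Equiv.ofBijective _ hτ.bijective_of_finite, mem_univ _, by ext; simp⟩

theorem det_mul_eq_sum_det_submatrix [Fintype m] [DecidableEq m] (A : Matrix n m R)
    (B : Matrix m n R) (e : ∀ S : Finset m, S.card = Fintype.card n → n ≃ S) :
    (A * B).det = ∑ S : Finset m, if h : S.card = Fintype.card n then
      (A.submatrix id (fun i => (e S h i : m))).det * (B.submatrix (fun i => (e S h i : m)) id).det
      else 0 := by
  rw [det_mul_eq_sum_fun, ← sum_filter_of_ne (p := Function.Injective) fun p _ h => ?_,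
    ← sum_fiberwise _ (fun p => univ.image p)]
  · refine sum_congr rfl fun S _ => ?_
    rw [filter_filter]
    split_ifs with h
    · exact (sum_injective_image_eq _ (e S h)).trans
        (sum_perm_det_submatrix_comp A B fun i => e S h i)
    · refine sum_eq_zero fun p hp => absurd ?_ h
      obtain ⟨hinj, rfl⟩ := (mem_filter.1 hp).2
      rw [card_image_of_injective _ hinj, card_univ]
  · contrapose! h
    obtain ⟨i, j, hij, hne⟩ := Function.not_injective_iff.1 h
    rw [det_zero_of_column_eq hne fun k => by simp [hij], zero_mul]

end CauchyBinet

section Graph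

variable {src tgt : E → V}

theorem reach_of_mem {S : Finset E} {e : E} (he : e ∈ S) : Reach src tgt S (src e) (tgt e) :=
  Relation.EqvGen.rel _ _ ⟨e, he, Or.inl ⟨rfl, rfl⟩⟩

theorem Reach.apply_eq {α : Sort*} {S : Finset E} {φ : V → α}
    (hφ : ∀ e ∈ S, φ (src e) = φ (tgt e)) {a b : V} (h : Reach src tgt S a b) : φ a = φ b := by
  induction h with
  | rel x y hxy =>
    obtain ⟨e, he, ⟨rfl, rfl⟩ | ⟨rfl, rfl⟩⟩ := hxy
    exacts [hφ e he, (hφ e he).symm]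
  | refl => rfl
  | symm _ _ _ ih => exact ih.symm
  | trans _ _ _ _ _ ih₁ ih₂ => exact ih₁.trans ih₂

theorem reach_iff_of_mem {S : Finset E} {e : E} (he : e ∈ S) (a : V) :
    Reach src tgt S a (src e) ↔ Reach src tgt S a (tgt e) :=
  have hre := (reachSetoid src tgt S).iseqv
  ⟨fun h => hre.trans h (reach_of_mem he), fun h => hre.trans h (hre.symm (reach_of_mem he))⟩

theorem ConnectedVia.card_le [Fintype V] {S : Finset E} (hS : ConnectedVia src tgt S) :
    Fintype.card V ≤ S.card + 1 := by
  cases isEmpty_or_nonempty V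
  · simp
  let G := SimpleGraph.fromRel (Step src tgt S)
  have hG : G.Connected := by
    refine (SimpleGraph.connected_iff_exists_forall_reachable G).2
      ⟨Classical.arbitrary V, fun b => ?_⟩
    refine SimpleGraph.ConnectedComponent.exact <| Reach.apply_eq (fun e he => ?_) (hS _ b)
    by_cases h : src e = tgt e
    · rw [h]
    · exact SimpleGraph.ConnectedComponent.sound
        (SimpleGraph.Adj.reachable ⟨h, Or.inl ⟨e, he, Or.inl ⟨rfl, rfl⟩⟩⟩)
  have hedges : G.edgeSet ⊆ (fun e => s(src e, tgt e)) '' S := by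
    intro x hx
    induction x using Sym2.ind with | _ a b => ?_
    obtain ⟨-, ⟨e, he, hab⟩ | ⟨e, he, hab⟩⟩ := hx <;>
      obtain ⟨rfl, rfl⟩ | ⟨rfl, rfl⟩ := hab <;>
      exact ⟨e, he, by simp [Sym2.eq_swap]⟩
  calc Fintype.card V = Nat.card V := Nat.card_eq_fintype_card.symm
    _ ≤ Nat.card G.edgeSet + 1 := hG.card_vert_le_card_edgeSet_add_one
    _ ≤ S.card + 1 := by
      rw [Nat.card_coe_set_eq, ← Set.ncard_coe_finset S]
      exact Nat.add_le_add_right ((Set.ncard_le_ncard hedges (S.finite_toSet.image _)).trans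
        (Set.ncard_image_le S.finite_toSet)) 1

theorem not_reach_erase_of_isSpanningTree [Fintype V] {T : Finset E}
    (hT : IsSpanningTree src tgt T) {f : E} (hf : f ∈ T) :
    ¬Reach src tgt (T.erase f) (src f) (tgt f) := by
  intro hreach
  have hconn : ConnectedVia src tgt (T.erase f) := fun a b => Quotient.exact <|
    Reach.apply_eq (φ := Quotient.mk (reachSetoid src tgt (T.erase f))) (fun e he => by
      by_cases hef : e = f
      · exact Quotient.sound (hef ▸ hreach)
      · exact Quotient.sound (reach_of_mem (Finset.mem_erase.2 ⟨hef, he⟩))) (hT.1 a b)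
  have := hconn.card_le
  rw [Finset.card_erase_of_mem hf, ← hT.2] at this
  have := Finset.card_pos.2 ⟨f, hf⟩
  omega

theorem card_eq_card_compl_of_isSpanningTree [Fintype V] [Fintype E] [DecidableEq E]
    {T₀ S : Finset E} (hT₀ : IsSpanningTree src tgt T₀) (hS : IsSpanningTree src tgt Sᶜ) :
    S.card = Fintype.card {e : E // e ∉ T₀} := by
  have := hS.2
  have := hT₀.2
  rw [Finset.card_compl] at *
  rw [Fintype.card_subtype_compl, Fintype.card_coe]
  have := S.card_le_univ
  omega

end Graph

section Chains

variable [Fintype E] [DecidableEq V] {src tgt : E → V}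

theorem bdry_single [DecidableEq E] (e : E) (t : ℤ) :
    bdry src tgt (Pi.single e t) = t • (Pi.single (tgt e) 1 - Pi.single (src e) 1) := by
  ext v
  simp [bdry, Pi.single_apply, eq_comm]

theorem sum_coboundary_mul_eq_zero [Fintype V] (g : V → ℤ) {c : E → ℤ}
    (hc : bdry src tgt c = 0) : ∑ e, (g (tgt e) - g (src e)) * c e = 0 := by
  have h : ∑ v, g v * bdry src tgt c v = 0 := by simp [hc]
  rw [← h]
  simp only [bdry, Finset.mul_sum]
  rw [Finset.sum_comm]
  refine Finset.sum_congr rfl fun e _ => ?_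
  simp [mul_sub, Finset.sum_sub_distrib, mul_comm]

theorem eq_zero_of_bdry_eq_zero [Fintype V] {T : Finset E} (hT : IsSpanningTree src tgt T)
    {c : E → ℤ} (hsupp : Function.support c ⊆ T) (hc : bdry src tgt c = 0) : c = 0 := by
  ext f
  by_contra hf
  have hfT : f ∈ T := hsupp hf
  -- pair `c` with the cut separating the two sides of the bridge `f` of `T`
  let g : V → ℤ := fun v => if Reach src tgt (T.erase f) (src f) v then 1 else 0
  have hcut : ∑ e, (g (tgt e) - g (src e)) * c e = -c f := by
    rw [Fintype.sum_eq_single f fun e hef => ?_]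
    · have hrefl : Reach src tgt (T.erase f) (src f) (src f) := Relation.EqvGen.refl _
      simp [g, hrefl, not_reach_erase_of_isSpanningTree hT hfT]
    · by_cases hce : c e = 0
      · simp [hce]
      · simp [g, ← reach_iff_of_mem (Finset.mem_erase.2 ⟨hef, hsupp hce⟩)]
  exact hf (neg_eq_zero.1 (hcut ▸ sum_coboundary_mul_eq_zero g hc))

theorem exists_chain_of_reach [DecidableEq E] {T : Finset E} {a b : V}
    (h : Reach src tgt T a b) :
    ∃ d : E → ℤ, Function.support d ⊆ T ∧ bdry src tgt d = Pi.single b 1 - Pi.single a 1 := by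
  induction h with
  | rel x y hxy =>
    obtain ⟨e, he, ⟨rfl, rfl⟩ | ⟨rfl, rfl⟩⟩ := hxy
    · exact ⟨Pi.single e 1, Pi.support_single_subset.trans (by simpa using he),
        by rw [bdry_single, one_smul]⟩
    · exact ⟨Pi.single e (-1), Pi.support_single_subset.trans (by simpa using he),
        by rw [bdry_single, neg_smul, one_smul, neg_sub]⟩
  | refl x => exact ⟨0, by simp, by ext; simp [bdry]⟩
  | symm x y _ ih =>
    obtain ⟨d, hd, hbd⟩ := ih
    refine ⟨-d, by rwa [Function.support_neg], ?_⟩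
    change bdryHom src tgt (-d) = _
    rw [map_neg]
    exact (congrArg Neg.neg hbd).trans (neg_sub _ _)
  | trans x y z _ _ ih₁ ih₂ =>
    obtain ⟨d₁, hd₁, hbd₁⟩ := ih₁
    obtain ⟨d₂, hd₂, hbd₂⟩ := ih₂
    refine ⟨d₁ + d₂, (Function.support_add _ _).trans (Set.union_subset hd₁ hd₂), ?_⟩
    change bdryHom src tgt (d₁ + d₂) = _
    rw [map_add]
    exact (congrArg₂ (· + ·) hbd₁ hbd₂).trans (sub_add_sub_cancel' _ _ _)

end Chains

section FundamentalCycles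

theorem Zchain_eq [DecidableEq E] {T₀ : Finset E} (D : {e : E // e ∉ T₀} → E → ℤ)
    (j : {e : E // e ∉ T₀}) : Zchain T₀ D j = Pi.single (j : E) 1 + D j := by
  ext e
  simp [Zchain, Pi.single_apply]

variable [Fintype V] [Fintype E] [DecidableEq V] [DecidableEq E] {src tgt : E → V}
  {T T₀ : Finset E} {D : {e : E // e ∉ T₀} → E → ℤ}

theorem Zchain_apply_of_notMem (hD : IsPathData src tgt T₀ D) (j : {e : E // e ∉ T₀}) {x : E}
    (hx : x ∉ T₀) : Zchain T₀ D j x = if x = j then 1 else 0 := by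
  have : D j x = 0 := by_contra fun h => hx (hD.1 j x h)
  simp [Zchain, this]

theorem exists_isPathData (hT : ConnectedVia src tgt T) :
    ∃ D : {e : E // e ∉ T} → E → ℤ, IsPathData src tgt T D := by
  choose d hd using fun j : {e : E // e ∉ T} => exists_chain_of_reach (hT (tgt j) (src j))
  refine ⟨d, fun j f hf => (hd j).1 hf, fun j => ?_⟩
  change bdryHom src tgt (Zchain T d j) = 0
  rw [Zchain_eq, map_add]
  change bdry src tgt _ + bdry src tgt _ = 0
  rw [bdry_single, (hd j).2, one_smul, sub_add_sub_cancel, sub_self]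

theorem eq_sum_smul_Zchain (hT₀ : IsSpanningTree src tgt T₀) (hD : IsPathData src tgt T₀ D)
    {c : E → ℤ} (hc : bdry src tgt c = 0) : c = ∑ j : {e : E // e ∉ T₀}, c j • Zchain T₀ D j := by
  refine sub_eq_zero.1 (eq_zero_of_bdry_eq_zero hT₀ (fun x hx => by_contra fun hxT => hx ?_) ?_)
  · rw [Pi.sub_apply, Finset.sum_apply, Fintype.sum_eq_single ⟨x, hxT⟩ fun j hj => ?_]
    · simp [Zchain_apply_of_notMem hD _ hxT]
    · have : x ≠ j := fun h => hj (Subtype.ext h.symm)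
      simp [Zchain_apply_of_notMem hD _ hxT, this]
  · change bdryHom src tgt _ = 0
    simp only [map_sub, map_sum, map_zsmul]
    simp [bdryHom, hc, hD.2]

end FundamentalCycles

section Determinants

variable [Fintype V] [Fintype E] [DecidableEq V] [DecidableEq E] {src tgt : E → V}
  {T T₀ : Finset E} {D : {e : E // e ∉ T₀} → E → ℤ}

theorem isUnit_det_Zchain_of_connectedVia (hT₀ : IsSpanningTree src tgt T₀)
    (hD : IsPathData src tgt T₀ D) (hT : ConnectedVia src tgt T)
    (e : {x : E // x ∉ T₀} ≃ {x : E // x ∉ T}) :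
    IsUnit (of fun i j => Zchain T₀ D j (e i)).det := by
  obtain ⟨D', hD'⟩ := exists_isPathData hT
  -- the values of the fundamental cycles of `T` on the edges `j ∉ T₀` give the inverse matrix
  let N : Matrix {x : E // x ∉ T₀} {x : E // x ∉ T₀} ℤ := of fun j k => Zchain T D' (e k) j
  have hN : (of fun i j => Zchain T₀ D j (e i)) * N = 1 := by
    ext i k
    have h := congrFun (eq_sum_smul_Zchain hT₀ hD (hD'.2 (e k))) (e i)
    rw [Zchain_apply_of_notMem hD' _ (e i).2] at h
    simp only [Subtype.coe_inj, e.apply_eq_iff_eq, Finset.sum_apply, Pi.smul_apply,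
      smul_eq_mul] at h
    rw [mul_apply, one_apply, h]
    exact Finset.sum_congr rfl fun j _ => mul_comm _ _
  exact IsUnit.of_mul_eq_one N.det (by rw [← det_mul, hN, det_one])

theorem det_eq_zero_of_not_connectedVia {ι : Type*} [Fintype ι] [DecidableEq ι]
    (z : ι → E → ℤ) (hz : ∀ j, bdry src tgt (z j) = 0) (hG : ConnectedVia src tgt Finset.univ)
    (hT : ¬ConnectedVia src tgt T) (e : ι ≃ {x : E // x ∉ T}) :
    (of fun i j => z j (e i)).det = 0 := by
  obtain ⟨a, b, hab⟩ : ∃ a b, ¬Reach src tgt T a b := by simpa [ConnectedVia] using hT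
  let g : V → ℤ := fun v => if Reach src tgt T a v then 1 else 0
  let δ : E → ℤ := fun x => g (tgt x) - g (src x)
  have hδT (x : E) (hx : x ∈ T) : δ x = 0 := by simp [δ, g, ← reach_iff_of_mem hx]
  obtain ⟨x, hx⟩ : ∃ x, δ x ≠ 0 := by
    by_contra! h
    have hrefl : Reach src tgt T a a := Relation.EqvGen.refl a
    have := Reach.apply_eq (φ := g) (fun x _ => (sub_eq_zero.1 (h x)).symm) (hG a b)
    simp [g, hab, hrefl] at this
  refine exists_vecMul_eq_zero_iff.1 ⟨fun i => δ (e i), fun h => hx ?_, ?_⟩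
  · simpa using congrFun h (e.symm ⟨x, fun hxT => hx (hδT x hxT)⟩)
  · ext j
    have := sum_coboundary_mul_eq_zero g (hz j)
    rw [← Fintype.sum_subtype_add_sum_subtype (· ∈ T), Finset.sum_eq_zero fun y _ => by
      change δ y * _ = 0; rw [hδT y y.2, zero_mul], zero_add] at this
    simpa [vecMul, dotProduct, ← e.sum_comp] using this

theorem det_Zchain_sq (hG : ConnectedVia src tgt Finset.univ) (hT₀ : IsSpanningTree src tgt T₀)
    (hD : IsPathData src tgt T₀ D) (e : {x : E // x ∉ T₀} ≃ {x : E // x ∉ T}) :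
    (of fun i j => Zchain T₀ D j (e i)).det ^ 2 = if IsSpanningTree src tgt T then 1 else 0 := by
  split_ifs with hT
  · exact Int.isUnit_sq (isUnit_det_Zchain_of_connectedVia hT₀ hD hT.1 e)
  · have hcard : T.card + 1 = Fintype.card V := by
      have := Fintype.card_congr e
      simp only [Fintype.card_subtype_compl, Fintype.card_coe] at this
      have := T.card_le_univ
      have := T₀.card_le_univ
      have := hT₀.2
      omega
    rw [det_eq_zero_of_not_connectedVia _ hD.2 hG (fun hc => hT ⟨hc, hcard⟩) e]
    norm_num

end Determinants

/-- (Trent) `det(Mesh(G,T0)) = ST(G)`, the number of spanning trees of `G`;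
in particular the determinant is independent of the choice of the spanning tree `T0`
and of the choices of edge directions. -/
theorem stmt1 {V E : Type} [Fintype V] [Fintype E] [DecidableEq V] [DecidableEq E]
    (src tgt : E → V) (hG : ConnectedVia src tgt Finset.univ)
    (T0 : Finset E) (hT0 : IsSpanningTree src tgt T0)
    (D : {e : E // e ∉ T0} → E → ℤ) (hD : IsPathData src tgt T0 D) :
    (MeshM T0 D).det = (ST src tgt : ℤ) := by
  let Z : Matrix E {e : E // e ∉ T0} ℤ := of fun x j => Zchain T0 D j x
  let e (S : Finset E) (h : S.card = Fintype.card {e : E // e ∉ T0}) : {e : E // e ∉ T0} ≃ S :=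
    Fintype.equivOfCardEq (by rw [Fintype.card_coe, h])
  calc (MeshM T0 D).det = (Zᵀ * Z).det := rfl
    _ = ∑ S : Finset E, if IsSpanningTree src tgt Sᶜ then (1 : ℤ) else 0 := by
      rw [det_mul_eq_sum_det_submatrix _ _ e]
      refine Finset.sum_congr rfl fun S _ => ?_
      by_cases h : S.card = Fintype.card {e : E // e ∉ T0}
      · rw [dif_pos h, ← transpose_submatrix, det_transpose, ← sq]
        exact det_Zchain_sq hG hT0 hD ((e S h).trans
          (Equiv.subtypeEquivRight fun x => by rw [Finset.mem_compl, not_not]))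
      · rw [dif_neg h, if_neg (mt (card_eq_card_compl_of_isSpanningTree hT0) h)]
    _ = ∑ T : Finset E, if IsSpanningTree src tgt T then (1 : ℤ) else 0 :=
      Equiv.sum_comp (Function.Involutive.toPerm _ compl_involutive)
        fun T => if IsSpanningTree src tgt T then (1 : ℤ) else 0
    _ = ST src tgt := by simp [ST, Nat.card_eq_fintype_card, Fintype.card_subtype]

end Mesh
end

section
/- Let G be a finite connected multigraph with spanning tree T0. Then Mesh(G,T0) − Id_N = YᵀY is a positive semidefinite symmetric integer matrix; consequently every eigenvalue of the mesh matrix Mesh(G,T0) is real and ≥ +1. -/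
open scoped Classical
open Polynomial BigOperators Matrix

namespace Mesh

variable {V E : Type}

/-!
In `Z[j] = e_j + D(e_j)` the chain `D(e_j)` lives on tree edges, which are distinct from every
non-tree edge `e_k`. Expanding `⟨Z[j₁], Z[j₂]⟩` therefore leaves only
`δ_{j₁j₂} + ⟨D(e_{j₁}), D(e_{j₂})⟩`, i.e. `Mesh = Id + YᵀY`. The Gram matrix `YᵀY` is positive
semidefinite, and the spectrum of `Mesh` is that of `YᵀY` shifted by `1`.
-/

open scoped ComplexOrder

section Matrix

variable {m n : Type} [Fintype m] [Fintype n]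

theorem posSemidef_map_intCast_transpose_mul_self {𝕜 : Type} [RCLike 𝕜] (A : Matrix m n ℤ) :
    ((Aᵀ * A).map (Int.cast : ℤ → 𝕜)).PosSemidef := by
  have hA : (Aᵀ * A).map (Int.cast : ℤ → 𝕜) = (A.map Int.cast)ᴴ * A.map Int.cast := by
    rw [← conjTranspose_map _ fun z => (star_intCast (R := 𝕜) z).symm,
      conjTranspose_eq_transpose_of_trivial, transpose_map]
    exact Matrix.map_mul (f := Int.castRingHom 𝕜)
  rw [hA]
  exact posSemidef_conjTranspose_mul_self _

theorem exists_real_one_le_of_mem_spectrum [DecidableEq n] {M : Matrix n n ℂ}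
    (hM : (M - 1).PosSemidef) {μ : ℂ} (hμ : μ ∈ spectrum ℂ M) :
    ∃ r : ℝ, μ = r ∧ 1 ≤ r := by
  have hμ1 : μ - 1 ∈ spectrum ℂ (M - 1) := by
    rw [← map_one (algebraMap ℂ (Matrix n n ℂ)), ← spectrum.sub_singleton_eq]
    exact Set.sub_mem_sub hμ rfl
  have h1μ : 1 ≤ μ :=
    sub_nonneg.mp ((posSemidef_iff_isHermitian_and_spectrum_nonneg.mp hM).2 hμ1)
  obtain ⟨hre, him⟩ := Complex.le_def.mp h1μ
  exact ⟨μ.re, Complex.ext rfl (by simpa using him.symm), hre⟩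

end Matrix

theorem sum_mul_eq_sum_subtype_of_support {ι R : Type} [Fintype ι] [CommSemiring R]
    (s : Finset ι) {f : ι → R} (hf : ∀ i, f i ≠ 0 → i ∈ s) (g : ι → R) :
    ∑ i, f i * g i = ∑ i : s, f i * g i := by
  rw [Finset.sum_coe_sort s fun i => f i * g i]
  refine (Finset.sum_subset (Finset.subset_univ s) fun i _ hi => ?_).symm
  rw [not_imp_comm.mp (hf i) hi, zero_mul]

theorem meshM_apply [Fintype E] [DecidableEq E] (T0 : Finset E)
    (D : {e : E // e ∉ T0} → E → ℤ) (j₁ j₂ : {e : E // e ∉ T0}) :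
    MeshM T0 D j₁ j₂ =
      (if j₁ = j₂ then 1 else 0) + D j₂ j₁ + D j₁ j₂ + ∑ e, D j₁ e * D j₂ e := by
  simp only [MeshM, Zchain, of_apply, add_mul, mul_add, Finset.sum_add_distrib, ite_mul, mul_ite,
    one_mul, zero_mul, mul_one, mul_zero, Finset.sum_ite_eq', Finset.mem_univ, if_true,
    Subtype.coe_inj, eq_comm (a := j₂)]
  ring

theorem meshM_sub_one_eq_transpose_mul [Fintype E] [DecidableEq E] {T0 : Finset E}
    {D : {e : E // e ∉ T0} → E → ℤ} (hD : ∀ j f, D j f ≠ 0 → f ∈ T0) :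
    MeshM T0 D - 1 = (Ymat T0 D)ᵀ * Ymat T0 D := by
  have hD_off_tree : ∀ j j' : {e : E // e ∉ T0}, D j j' = 0 := fun j j' =>
    not_imp_comm.mp (hD j j') j'.2
  ext j₁ j₂
  rw [Matrix.sub_apply, meshM_apply, one_apply, hD_off_tree, hD_off_tree,
    sum_mul_eq_sum_subtype_of_support T0 (hD j₁)]
  simp [Ymat, mul_apply]

theorem stmt2_general {V E : Type} [Fintype V] [Fintype E] [DecidableEq V] [DecidableEq E]
    (src tgt : E → V)
    (T0 : Finset E)
    (D : {e : E // e ∉ T0} → E → ℤ) (hD : IsPathData src tgt T0 D) :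
    MeshM T0 D - 1 = (Ymat T0 D)ᵀ * Ymat T0 D
    ∧ (MeshM T0 D - 1).IsSymm
    ∧ ((MeshM T0 D - 1).map (Int.cast : ℤ → ℝ)).PosSemidef
    ∧ ∀ μ : ℂ, μ ∈ spectrum ℂ ((MeshM T0 D).map (Int.cast : ℤ → ℂ)) →
        ∃ r : ℝ, μ = (r : ℂ) ∧ 1 ≤ r := by
  have hY := meshM_sub_one_eq_transpose_mul hD.1
  refine ⟨hY, by rw [hY, IsSymm, transpose_mul, transpose_transpose],
    hY ▸ posSemidef_map_intCast_transpose_mul_self _,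
    fun μ hμ => exists_real_one_le_of_mem_spectrum ?_ hμ⟩
  have hmap : (MeshM T0 D).map (Int.cast : ℤ → ℂ) - 1 = (MeshM T0 D - 1).map Int.cast := by
    rw [Matrix.map_sub _ Int.cast_sub, Matrix.map_one _ Int.cast_zero Int.cast_one]
  rw [hmap, hY]
  exact posSemidef_map_intCast_transpose_mul_self _

/-- `Mesh(G,T0) - Id = YᵀY` is a positive semidefinite symmetric integer
matrix; consequently every eigenvalue of `Mesh(G,T0)` is real and `≥ 1`. -/
theorem stmt2 {V E : Type} [Fintype V] [Fintype E] [DecidableEq V] [DecidableEq E]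
    (src tgt : E → V) (hG : ConnectedVia src tgt Finset.univ)
    (T0 : Finset E) (hT0 : IsSpanningTree src tgt T0)
    (D : {e : E // e ∉ T0} → E → ℤ) (hD : IsPathData src tgt T0 D) :
    MeshM T0 D - 1 = (Ymat T0 D)ᵀ * Ymat T0 D
    ∧ (MeshM T0 D - 1).IsSymm
    ∧ ((MeshM T0 D - 1).map (Int.cast : ℤ → ℝ)).PosSemidef
    ∧ ∀ μ : ℂ, μ ∈ spectrum ℂ ((MeshM T0 D).map (Int.cast : ℤ → ℂ)) →
        ∃ r : ℝ, μ = (r : ℂ) ∧ 1 ≤ r :=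
  stmt2_general src tgt T0 D hD

end Mesh
end

section
/- Let G be a finite connected multigraph with spanning tree T0, and let Y[k,j] = ⟨f_k, Z[j]⟩ be the coefficient of f_k in D(e_j). Then the 1-chains b[f_k] = f_k − Σ_{j=1}^{N} Y[k,j]·e_j, for k = 1,…,M, form an integral basis of the subgroup Π(B^1(G;ℤ)) of C_1(G;ℤ). -/
/-!
Pairing a coboundary `δg` with the fundamental cycle `Z[j]` gives `0`, so
`δg(e_j) = -Σ_k δg(f_k) Y[k,j]`: a coboundary is determined by its values on the tree edges and
equals `Σ_k δg(f_k) b[f_k]`. The coefficients are unique because `b[f_k]` restricted to the tree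
is the indicator of `f_k`. Each `b[f_k]` is itself a coboundary because `δ` followed by
restriction to a spanning tree is onto `ℤ^{T0}`: over `ℚ` by a dimension count (connectedness
makes the kernel the constants), and a rational potential with integral differences along a
connected tree is integral up to a constant.
-/

open scoped Classical
open Polynomial BigOperators Matrix

namespace Mesh

variable {V E : Type}

/-- The 1-chain `b[f_k] = f_k - Σ_j Y[k,j] e_j`. -/
noncomputable def Bchain {E : Type} [DecidableEq E] (T0 : Finset E)
    (D : {e : E // e ∉ T0} → E → ℤ) (k : {f : E // f ∈ T0}) : E → ℤ :=
  fun e => (if e = (k : E) then 1 else 0) - (if h : e ∈ T0 then 0 else D ⟨e, h⟩ (k : E))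

section Potentials

variable {src tgt : E → V} {S : Finset E}

theorem Reach.sub_mem {A : Type*} [AddCommGroup A] (H : AddSubgroup A) {g : V → A}
    (hg : ∀ f ∈ S, g (tgt f) - g (src f) ∈ H) {a b : V} (h : Reach src tgt S a b) :
    g b - g a ∈ H := by
  induction h with
  | rel a b hab =>
    obtain ⟨f, hf, ⟨rfl, rfl⟩ | ⟨rfl, rfl⟩⟩ := hab
    · exact hg f hf
    · simpa using H.neg_mem (hg f hf)
  | refl a => simp
  | symm a b _ ih => simpa using H.neg_mem ih
  | trans a b c _ _ hab hbc => simpa using H.add_mem hbc hab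

theorem IsSpanningTree.nonempty [Fintype V] (hS : IsSpanningTree src tgt S) : Nonempty V :=
  Fintype.card_pos_iff.mp (by have := hS.2; omega)

theorem IsSpanningTree.exists_potential [Fintype V] {K : Type*} [Field K]
    (hS : IsSpanningTree src tgt S) (t : S → K) :
    ∃ g : V → K, ∀ f : S, g (tgt f) - g (src f) = t f := by
  let δ : (V → K) →ₗ[K] (S → K) :=
    LinearMap.funLeft K K (tgt ∘ (↑)) - LinearMap.funLeft K K (src ∘ (↑))
  obtain ⟨v₀⟩ := hS.nonempty
  have hker : LinearMap.ker δ ≤ K ∙ (1 : V → K) := by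
    intro g hg
    have hconst (v : V) : g v = g v₀ := by
      refine sub_eq_zero.mp (Reach.sub_mem ⊥ (fun f hf => ?_) (hS.1 v₀ v))
      simpa [δ, sub_eq_zero] using congrFun hg ⟨f, hf⟩
    exact Submodule.mem_span_singleton.mpr ⟨g v₀, funext fun v => by simp [hconst v]⟩
  have hrange : LinearMap.range δ = ⊤ := by
    apply Submodule.eq_top_of_finrank_eq
    have hrank := LinearMap.finrank_range_add_finrank_ker δ
    have hker_le := Submodule.finrank_mono hker
    have hrange_le := Submodule.finrank_le (LinearMap.range δ)
    rw [finrank_span_singleton fun h => one_ne_zero (congrFun h v₀)] at hker_le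
    simp only [Module.finrank_pi, Fintype.card_coe] at *
    have := hS.2
    omega
  obtain ⟨g, hg⟩ := LinearMap.range_eq_top.mp hrange t
  exact ⟨g, fun f => congrFun hg f⟩

theorem IsSpanningTree.exists_int_potential [Fintype V] (hS : IsSpanningTree src tgt S)
    (t : S → ℤ) : ∃ g : V → ℤ, ∀ f : S, g (tgt f) - g (src f) = t f := by
  obtain ⟨q, hq⟩ := hS.exists_potential (K := ℚ) fun f => (t f : ℚ)
  obtain ⟨v₀⟩ := hS.nonempty
  have hint (v : V) : q v - q v₀ ∈ (Int.castAddHom ℚ).range :=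
    Reach.sub_mem _ (fun f hf => AddMonoidHom.mem_range.mpr ⟨t ⟨f, hf⟩, by simp [hq ⟨f, hf⟩]⟩)
      (hS.1 v₀ v)
  choose m hm using hint
  refine ⟨m, fun f => Int.cast_injective (α := ℚ) ?_⟩
  simp only [Int.coe_castAddHom] at hm
  push_cast
  rw [hm, hm, ← hq f]
  ring

end Potentials

theorem sum_coboundary_mul_eq_sum_mul_bdry [Fintype V] [Fintype E] [DecidableEq V]
    (src tgt : E → V) (g : V → ℤ) (z : E → ℤ) :
    ∑ e, (g (tgt e) - g (src e)) * z e = ∑ v, g v * bdry src tgt z v := by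
  simp only [bdry, Finset.mul_sum]
  rw [Finset.sum_comm]
  refine Finset.sum_congr rfl fun e _ => ?_
  simp only [mul_sub, mul_ite, mul_one, mul_zero, Finset.sum_sub_distrib, Finset.sum_ite_eq,
    Finset.mem_univ, if_true]
  ring

section Chains

variable [DecidableEq E] {T0 : Finset E} {D : {e : E // e ∉ T0} → E → ℤ}

theorem IsPathData.coboundary_apply_of_notMem [Fintype V] [Fintype E] [DecidableEq V]
    {src tgt : E → V} (hD : IsPathData src tgt T0 D) (g : V → ℤ)
    (j : {e : E // e ∉ T0}) :
    g (tgt j) - g (src j) = -∑ k : T0, (g (tgt k) - g (src k)) * D j k := by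
  have horth := sum_coboundary_mul_eq_sum_mul_bdry src tgt g (Zchain T0 D j)
  simp only [hD.2 j, Zchain, mul_add, mul_ite, mul_one, mul_zero, Finset.sum_add_distrib,
    Finset.sum_ite_eq', Finset.mem_univ, if_true, Pi.zero_apply, Finset.sum_const_zero] at horth
  rw [Finset.sum_coe_sort T0 fun f => (g (tgt f) - g (src f)) * D j f,
    Fintype.sum_subset fun f hf => hD.1 j f (right_ne_zero_of_mul hf)]
  linarith

theorem bchain_apply_of_mem (D : {e : E // e ∉ T0} → E → ℤ) (k k' : T0) :
    Bchain T0 D k k' = if k' = k then 1 else 0 := by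
  simp only [Bchain, dif_pos k'.2, sub_zero, Subtype.coe_inj]

theorem bchain_apply_of_notMem (D : {e : E // e ∉ T0} → E → ℤ) (k : T0) {e : E}
    (he : e ∉ T0) : Bchain T0 D k e = -D ⟨e, he⟩ k := by
  have hek : e ≠ k := fun h => he (h ▸ k.2)
  simp [Bchain, he, hek]

theorem sum_mul_bchain_apply_of_mem (D : {e : E // e ∉ T0} → E → ℤ) (y : T0 → ℤ) (k' : T0) :
    ∑ k, y k * Bchain T0 D k k' = y k' := by
  simp [bchain_apply_of_mem]

theorem IsPathData.coboundary_eq_sum_bchain [Fintype V] [Fintype E] [DecidableEq V]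
    {src tgt : E → V} (hD : IsPathData src tgt T0 D) (g : V → ℤ) :
    (fun e => g (tgt e) - g (src e)) =
      fun e => ∑ k : T0, (g (tgt k) - g (src k)) * Bchain T0 D k e := by
  funext e
  by_cases he : e ∈ T0
  · exact (sum_mul_bchain_apply_of_mem D (fun k => g (tgt k) - g (src k)) ⟨e, he⟩).symm
  · simp only [bchain_apply_of_notMem D _ he, mul_neg, Finset.sum_neg_distrib]
    exact hD.coboundary_apply_of_notMem g ⟨e, he⟩

end Chains

theorem stmt4_general {V E : Type} [Fintype V] [Fintype E] [DecidableEq V] [DecidableEq E]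
    (src tgt : E → V)
    (T0 : Finset E) (hT0 : IsSpanningTree src tgt T0)
    (D : {e : E // e ∉ T0} → E → ℤ) (hD : IsPathData src tgt T0 D) :
    (∀ k : {f : E // f ∈ T0},
        ∃ g : V → ℤ, Bchain T0 D k = fun e => g (tgt e) - g (src e))
    ∧ ∀ c : E → ℤ, (∃ g : V → ℤ, c = fun e => g (tgt e) - g (src e)) →
        ∃! y : {f : E // f ∈ T0} → ℤ, c = fun e => ∑ k, y k * Bchain T0 D k e := by
  refine ⟨fun k => ?_, ?_⟩
  · obtain ⟨g, hg⟩ := hT0.exists_int_potential (Pi.single k 1)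
    refine ⟨g, ?_⟩
    rw [hD.coboundary_eq_sum_bchain g]
    simp [hg, Pi.single_apply]
  · rintro c ⟨g, rfl⟩
    refine ⟨fun k => g (tgt k) - g (src k), hD.coboundary_eq_sum_bchain g,
      fun y hy => funext fun k => ?_⟩
    exact ((congrFun hy k).trans (sum_mul_bchain_apply_of_mem D y k)).symm

/-- The chains `b[f_k] = f_k - Σ_j Y[k,j]·e_j`, for `f_k ∈ T0`, form an
integral basis of the subgroup `Π(B¹(G;ℤ)) = {g∘tgt - g∘src | g : V → ℤ}` of `C_1(G;ℤ)`:
each `b[f_k]` lies in the subgroup, and every element of the subgroup is uniquely an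
integral combination of them. -/
theorem stmt4 {V E : Type} [Fintype V] [Fintype E] [DecidableEq V] [DecidableEq E]
    (src tgt : E → V) (hG : ConnectedVia src tgt Finset.univ)
    (T0 : Finset E) (hT0 : IsSpanningTree src tgt T0)
    (D : {e : E // e ∉ T0} → E → ℤ) (hD : IsPathData src tgt T0 D)
    (hY : ∀ (k : {f : E // f ∈ T0}) (j : {e : E // e ∉ T0}),
        D j (k : E) = ∑ e, (if e = (k : E) then (1 : ℤ) else 0) * Zchain T0 D j e) :
    (∀ k : {f : E // f ∈ T0},
        ∃ g : V → ℤ, Bchain T0 D k = fun e => g (tgt e) - g (src e))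
    ∧ ∀ c : E → ℤ, (∃ g : V → ℤ, c = fun e => g (tgt e) - g (src e)) →
        ∃! y : {f : E // f ∈ T0} → ℤ, c = fun e => ∑ k, y k * Bchain T0 D k e :=
  stmt4_general src tgt T0 hT0 D hD

end Mesh
end

section
/- Let H be a finite graph, and apply the mesh construction to the pair (C'(H), C(V(H))), where C'(H) is connected and C(V(H)) is a spanning tree of C'(H) whose edges are the cone edges (P → W) for P ∈ V(H). For each directed edge e_j = (P_j → Q_j) of H (the edges of C'(H) not in the spanning tree), the associated cycle is Z[j] = e_j + (Q_j → W) − (P_j → W), so D(e_j) = (Q_j → W) − (P_j → W); under the identification C_1(C(V(H));ℤ) ≅ C_0(H;ℤ) sending (P → W) to P, the map D becomes the standard boundary map ∂: C_1(H;ℤ) → C_0(H;ℤ), ∂(e_j) = Q_j − P_j. Consequently the mesh Laplacian Δ(C'(H),C(V(H))) = Y·Yᵀ equals the Kirchhoff graph Laplacian Δ(H) = ∂·∂ᵀ = Deg − Adj of H. -/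
open scoped Classical
open Polynomial BigOperators Matrix

namespace Mesh

variable {V E : Type}

/-!
The cone edges form a star centred at `W`, so the tree path from `Q` to `P` is `Q → W → P`
and `D(P → Q) = (Q → W) - (P → W)`, whose coordinates are those of `∂(P → Q) = Q - P`.
Hence `Y Yᵀ = ∂ ∂ᵀ`, and for a loopless multigraph the `(v, w)` entry of `∂ ∂ᵀ` is, edge by
edge, the degree contribution at `v = w` minus the number of edges joining `v` and `w`.
-/

section Incidence

variable [DecidableEq V]

theorem bdry_indicator [Fintype E] [DecidableEq E] (src tgt : E → V) (e : E) :
    bdry src tgt (fun x => if x = e then 1 else 0) = inc src tgt e := by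
  funext v
  simp [bdry, inc]

theorem inc_mul_inc (src tgt : E → V) (e : E) (hloop : src e ≠ tgt e) (v w : V) :
    inc src tgt e v * inc src tgt e w
      = (if v = w then (if src e = v then 1 else 0) + (if tgt e = v then 1 else 0) else 0)
        - (if (src e = v ∧ tgt e = w) ∨ (src e = w ∧ tgt e = v) then 1 else 0) := by
  unfold inc
  by_cases hvw : v = w
  · subst hvw
    split_ifs <;> simp_all
  · split_ifs <;> simp_all

theorem sum_inc_mul_inc_eq_lapDegAdj [Fintype E] (src tgt : E → V)
    (hloopfree : ∀ e : E, src e ≠ tgt e) :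
    Matrix.of (fun v w : V => ∑ e : E, inc src tgt e v * inc src tgt e w) = LapDegAdj src tgt := by
  ext v w
  simp only [Matrix.of_apply, LapDegAdj, Finset.card_filter, inc_mul_inc src tgt _ (hloopfree _)]
  push_cast
  rw [Finset.sum_sub_distrib]
  split_ifs
  · rw [Finset.sum_add_distrib]
  · rw [Finset.sum_const_zero]

end Incidence

section Cone

theorem coneD_inr [DecidableEq V] [DecidableEq E] (src tgt : E → V) (e : E) (v : V) :
    coneD src tgt e (Sum.inr v) = inc src tgt e v := by
  simp [coneD, inc, eq_comm]

theorem reach_none_of_cone_subset (src tgt : E → V) (S : Finset (E ⊕ V))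
    (hS : ∀ p : V, Sum.inr p ∈ S) (a : Option V) :
    Reach (coneSrc src) (coneTgt tgt) S a none := by
  cases a with
  | none => exact Relation.EqvGen.refl none
  | some p => exact Relation.EqvGen.rel _ _ ⟨Sum.inr p, hS p, Or.inl ⟨rfl, rfl⟩⟩

theorem connectedVia_of_cone_subset (src tgt : E → V) (S : Finset (E ⊕ V))
    (hS : ∀ p : V, Sum.inr p ∈ S) :
    ConnectedVia (coneSrc src) (coneTgt tgt) S := fun a b =>
  (reach_none_of_cone_subset src tgt S hS a).trans _ _ _
    (reach_none_of_cone_subset src tgt S hS b).symm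

variable [Fintype E] [Fintype V]

theorem mem_coneTree {x : E ⊕ V} : x ∈ coneTree E V ↔ x.isRight = true := by
  simp [coneTree]

theorem card_coneTree : (coneTree E V).card = Fintype.card V := by
  rw [coneTree, Finset.card_filter, Fintype.sum_sum_type]
  simp

theorem isSpanningTree_coneTree (src tgt : E → V) :
    IsSpanningTree (coneSrc src) (coneTgt tgt) (coneTree E V) :=
  ⟨connectedVia_of_cone_subset src tgt _ fun _ => mem_coneTree.2 rfl, by
    rw [card_coneTree, Fintype.card_option]⟩

variable [DecidableEq V] [DecidableEq E]

theorem mem_coneTree_of_coneD_ne_zero (src tgt : E → V) (e : E) {x : E ⊕ V}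
    (hx : coneD src tgt e x ≠ 0) : x ∈ coneTree E V := by
  cases x with
  | inl _ => simp [coneD] at hx
  | inr _ => exact mem_coneTree.2 rfl

-- `Z[e]` is the sum of three edge indicators whose boundaries `Q - P`, `W - Q`, `P - W` cancel.
theorem bdry_cone_cycle (src tgt : E → V) (e : E) :
    bdry (coneSrc src) (coneTgt tgt)
      (fun x => (if x = Sum.inl e then 1 else 0) + coneD src tgt e x) = 0 := by
  have hchain : (fun x => (if x = Sum.inl e then 1 else 0) + coneD src tgt e x)
      = (fun x => if x = Sum.inl e then 1 else 0) + ((fun x => if x = Sum.inr (tgt e) then 1 else 0)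
        - fun x => if x = Sum.inr (src e) then 1 else 0) := rfl
  change bdryHom _ _ _ = 0
  rw [hchain, map_add, map_sub]
  simp only [bdryHom, AddMonoidHom.coe_mk, ZeroHom.coe_mk, bdry_indicator]
  funext v
  cases v <;> simp [inc, coneSrc, coneTgt]

end Cone

/-- For a finite graph `H` (no loops), in the pair `(C'(H), C(V(H)))`:
`C'(H)` is connected and the cone `C(V(H))` is a spanning tree; for each edge
`e = (P → Q)` of `H`, the chain `D(e) = (Q → W) - (P → W)` is supported in the cone and
`Z[e] = e + D(e)` is a 1-cycle; under the identification `(P → W) ↦ P` the map `D`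
becomes the boundary map `∂` of `H`; and the mesh Laplacian `Y·Yᵀ` equals the Kirchhoff
Laplacian `Δ(H) = Deg - Adj`. -/
theorem stmt6 {V E : Type} [Fintype V] [Fintype E] [DecidableEq V] [DecidableEq E]
    (src tgt : E → V) (hloopfree : ∀ e : E, src e ≠ tgt e) :
    ConnectedVia (coneSrc src) (coneTgt tgt) Finset.univ
    ∧ IsSpanningTree (coneSrc src) (coneTgt tgt) (coneTree E V)
    ∧ (∀ (e : E) (x : E ⊕ V), coneD src tgt e x ≠ 0 → x ∈ coneTree E V)
    ∧ (∀ e : E, bdry (coneSrc src) (coneTgt tgt)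
        (fun x => (if x = Sum.inl e then 1 else 0) + coneD src tgt e x) = 0)
    ∧ (∀ (e : E) (v : V), coneD src tgt e (Sum.inr v) = inc src tgt e v)
    ∧ (Matrix.of fun v w : V => ∑ e : E, coneD src tgt e (Sum.inr v) * coneD src tgt e (Sum.inr w))
        = LapDegAdj src tgt := by
  refine ⟨connectedVia_of_cone_subset src tgt _ fun _ => Finset.mem_univ _,
    isSpanningTree_coneTree src tgt, fun e _ => mem_coneTree_of_coneD_ne_zero src tgt e,
    bdry_cone_cycle src tgt, coneD_inr src tgt, ?_⟩
  simp only [coneD_inr]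
  exact sum_inc_mul_inc_eq_lapDegAdj src tgt hloopfree

end Mesh
end

section
/- Let G be a finite connected multigraph with spanning tree T0 whose tree edges are directed and labeled f_1,…,f_M. Then the entries of the mesh Laplacian Δ(G,T0) = Y·Yᵀ are: the diagonal entry at (f_k,f_k) equals the number of edges e ∈ E(G)−E(T0) such that f_k lies in the support of D(e); and for k ≠ l, the entry at (f_k,f_l) equals Sign(k,l) times the number of edges e ∈ E(G)−E(T0) such that both f_k and f_l lie in the support of D(e), where Sign(k,l) = ⟨f_k, γ⃗⟩·⟨f_l, γ⃗⟩ ∈ {±1} for γ⃗ the unique directed simple path in T0 from the edge f_k to the edge f_l. -/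
open scoped Classical
open Polynomial BigOperators Matrix

namespace Mesh

variable {V E : Type}

/-!
Deleting a tree edge `f` cuts `T0` into two components; `side f` is the indicator of the one
containing `tgt f`. Pairing the cycle condition `∂(e_j + D(e_j)) = 0` with the coboundary of
`side f` gives `D(e_j)(f) = side f (P_j) - side f (Q_j) ∈ {0, ±1}`, whence the diagonal.
For `k ≠ l`, deleting `f_k` and `f_l` cuts `T0` into three components, and `γ` runs from the
outer one at its start through the middle one to the outer one at its end. A non-tree edge
crosses both `f_k` and `f_l` iff it joins the two outer components, and then it crosses both
along `γ` or both against it, so `D(e)(f_k) · D(e)(f_l) = ⟨f_k, γ⟩⟨f_l, γ⟩`.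
-/

open Relation

section Reach

variable {src tgt : E → V} {F : Finset E}

instance : Std.Symm (Step src tgt F) := ⟨fun _ _ ⟨e, he, h⟩ => ⟨e, he, h.symm⟩⟩

lemma reach_iff_reflTransGen {a b : V} :
    Reach src tgt F a b ↔ ReflTransGen (Step src tgt F) a b := by
  rw [Reach, EqvGen.eqvGen_eq_reflTransGen]

lemma reach_mono {F' : Finset E} (h : F ⊆ F') {a b : V} (hr : Reach src tgt F a b) :
    Reach src tgt F' a b :=
  EqvGen.mono (fun _ _ ⟨e, he, h'⟩ => ⟨e, h he, h'⟩) _ _ hr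

lemma reach_src_tgt {e : E} (he : e ∈ F) : Reach src tgt F (src e) (tgt e) :=
  EqvGen.rel _ _ ⟨e, he, Or.inl ⟨rfl, rfl⟩⟩

lemma reach_dsrc_dtgt {x : E × Bool} (hx : x.1 ∈ F) :
    Reach src tgt F (dsrc src tgt x) (dtgt src tgt x) := by
  rcases x with ⟨e, _ | _⟩
  · exact EqvGen.symm _ _ (reach_src_tgt hx)
  · exact reach_src_tgt hx

lemma reach_insert_cases [DecidableEq E] {e : E} {v w : V}
    (h : Reach src tgt (insert e F) v w) :
    Reach src tgt F v w ∨ Reach src tgt F v (src e) ∨ Reach src tgt F v (tgt e) := by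
  rw [reach_iff_reflTransGen] at h
  induction h with
  | refl => exact Or.inl (EqvGen.refl _)
  | tail _ hstep ih =>
    obtain ⟨e', he', hends⟩ := hstep
    rcases Finset.mem_insert.mp he' with rfl | he'
    · refine Or.inr (ih.elim (fun hv => ?_) id)
      rcases hends with ⟨rfl, -⟩ | ⟨-, rfl⟩
      · exact Or.inl hv
      · exact Or.inr hv
    · exact ih.imp_left fun hv => EqvGen.trans _ _ _ hv (EqvGen.rel _ _ ⟨e', he', hends⟩)

lemma card_le_card_add_one_of_connectedVia [Fintype V] (h : ConnectedVia src tgt F) :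
    Fintype.card V ≤ F.card + 1 := by
  rcases isEmpty_or_nonempty V with hV | hV
  · simp
  set G := SimpleGraph.fromEdgeSet ((fun e => s(src e, tgt e)) '' (F : Set E))
  have hreach : ∀ a b, Reach src tgt F a b → G.Reachable a b := by
    intro a b hab
    induction hab with
    | rel a b hab =>
      obtain ⟨e, he, hends⟩ := hab
      by_cases hloop : src e = tgt e
      · rcases hends with ⟨rfl, rfl⟩ | ⟨rfl, rfl⟩ <;> rw [hloop]
      · refine SimpleGraph.Adj.reachable ?_
        rw [SimpleGraph.fromEdgeSet_adj]
        rcases hends with ⟨rfl, rfl⟩ | ⟨rfl, rfl⟩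
        · exact ⟨⟨e, he, rfl⟩, hloop⟩
        · exact ⟨⟨e, he, Sym2.eq_swap⟩, Ne.symm hloop⟩
    | refl a => rfl
    | symm a b _ ih => exact ih.symm
    | trans a b c _ _ ih₁ ih₂ => exact ih₁.trans ih₂
  have hG : G.Connected := ⟨fun a b => hreach a b (h a b)⟩
  calc Fintype.card V = Nat.card V := Nat.card_eq_fintype_card.symm
    _ ≤ Nat.card G.edgeSet + 1 := hG.card_vert_le_card_edgeSet_add_one
    _ ≤ F.card + 1 := by
      gcongr
      rw [Nat.card_coe_set_eq, ← Set.ncard_coe_finset]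
      calc G.edgeSet.ncard ≤ ((fun e => s(src e, tgt e)) '' (F : Set E)).ncard :=
            Set.ncard_le_ncard (by simp [G, SimpleGraph.edgeSet_fromEdgeSet]) (Set.toFinite _)
        _ ≤ (F : Set E).ncard := Set.ncard_image_le F.finite_toSet

lemma reach_dsrc_head_dsrc_getLast : ∀ (L : List (E × Bool)) (hL : L ≠ []),
    L.IsChain (fun x y => dtgt src tgt x = dsrc src tgt y) → (∀ x ∈ L.dropLast, x.1 ∈ F) →
    Reach src tgt F (dsrc src tgt (L.head hL)) (dsrc src tgt (L.getLast hL))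
  | [_], _, _, _ => EqvGen.refl _
  | x :: y :: ys, _, hchain, hF => by
    rw [List.isChain_cons_cons] at hchain
    have hrest := reach_dsrc_head_dsrc_getLast (y :: ys) (List.cons_ne_nil _ _) hchain.2
      fun z hz => hF z (by simp [hz])
    rw [List.head_cons, ← hchain.1] at hrest
    exact EqvGen.trans _ _ _ (reach_dsrc_dtgt (hF x (by simp))) hrest

lemma reach_erase_head_dtgt_dsrc_getLast [DecidableEq E] (L : List (E × Bool)) (hL : L ≠ [])
    (hchain : L.IsChain fun x y => dtgt src tgt x = dsrc src tgt y)
    (hnodup : (L.map Prod.fst).Nodup) (hF : ∀ x ∈ L, x.1 ∈ F)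
    (hends : (L.head hL).1 ≠ (L.getLast hL).1) :
    Reach src tgt (F.erase (L.head hL).1) (dtgt src tgt (L.head hL))
      (dsrc src tgt (L.getLast hL)) := by
  obtain ⟨a, T, rfl⟩ := List.exists_cons_of_ne_nil hL
  have hT : T ≠ [] := by rintro rfl; exact hends rfl
  simp only [List.head_cons, List.getLast_cons hT]
  rw [List.isChain_cons] at hchain
  have hlink : dtgt src tgt a = dsrc src tgt (T.head hT) :=
    hchain.1 _ (List.head?_eq_some_head hT)
  have haT : a.1 ∉ T.map Prod.fst := by rw [List.map_cons] at hnodup; exact hnodup.notMem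
  have h := reach_dsrc_head_dsrc_getLast (F := F.erase a.1) T hT hchain.2 fun x hx =>
    Finset.mem_erase.mpr
      ⟨fun hxa => haT (hxa ▸ List.mem_map_of_mem (List.dropLast_subset _ hx)),
        hF x (List.mem_cons_of_mem _ (List.dropLast_subset _ hx))⟩
  rwa [← hlink] at h

lemma reach_erase_getLast_dsrc_head_dsrc_getLast [DecidableEq E] (L : List (E × Bool))
    (hL : L ≠ [])
    (hchain : L.IsChain fun x y => dtgt src tgt x = dsrc src tgt y)
    (hnodup : (L.map Prod.fst).Nodup) (hF : ∀ x ∈ L, x.1 ∈ F) :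
    Reach src tgt (F.erase (L.getLast hL).1) (dsrc src tgt (L.head hL))
      (dsrc src tgt (L.getLast hL)) := by
  rw [← List.dropLast_append_getLast hL, List.map_append, List.nodup_append] at hnodup
  exact reach_dsrc_head_dsrc_getLast L hL hchain fun x hx =>
    Finset.mem_erase.mpr ⟨hnodup.2.2 _ (List.mem_map_of_mem hx) _ (by simp),
      hF x (List.dropLast_subset _ hx)⟩

end Reach

section SpanningTree

variable [Fintype V] [DecidableEq E] {src tgt : E → V} {T0 : Finset E} {f : E}

lemma IsSpanningTree.reach_erase_src_or_tgt (hT0 : IsSpanningTree src tgt T0) (hf : f ∈ T0)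
    (v : V) : Reach src tgt (T0.erase f) v (src f) ∨ Reach src tgt (T0.erase f) v (tgt f) := by
  have h := hT0.1 v (tgt f)
  rw [← Finset.insert_erase hf] at h
  exact (reach_insert_cases h).elim Or.inr id

lemma IsSpanningTree.not_reach_erase (hT0 : IsSpanningTree src tgt T0) (hf : f ∈ T0) :
    ¬ Reach src tgt (T0.erase f) (src f) (tgt f) := by
  intro h
  have hto : ∀ v, Reach src tgt (T0.erase f) v (tgt f) := fun v =>
    (hT0.reach_erase_src_or_tgt hf v).elim (fun hv => EqvGen.trans _ _ _ hv h) id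
  have hcard := card_le_card_add_one_of_connectedVia
    fun a b => EqvGen.trans _ _ _ (hto a) (EqvGen.symm _ _ (hto b))
  rw [Finset.card_erase_of_mem hf] at hcard
  have := hT0.2
  have := Finset.card_pos.mpr ⟨f, hf⟩
  omega

end SpanningTree

noncomputable def side [DecidableEq E] (src tgt : E → V) (T0 : Finset E) (f : E) (v : V) : ℤ :=
  if Reach src tgt (T0.erase f) v (tgt f) then 1 else 0

def dirSign (x : E × Bool) : ℤ := if x.2 then 1 else -1

section Side

variable [DecidableEq E] {src tgt : E → V} {T0 : Finset E} {f : E}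

lemma side_eq_zero_or_one (v : V) : side src tgt T0 f v = 0 ∨ side src tgt T0 f v = 1 := by
  unfold side; split_ifs <;> simp

lemma side_tgt : side src tgt T0 f (tgt f) = 1 := if_pos (EqvGen.refl _)

lemma side_eq_of_reach {v w : V} (h : Reach src tgt (T0.erase f) v w) :
    side src tgt T0 f v = side src tgt T0 f w := by
  unfold side
  congr 1
  exact propext ⟨EqvGen.trans _ _ _ (EqvGen.symm _ _ h), EqvGen.trans _ _ _ h⟩

variable [Fintype V]

lemma IsSpanningTree.side_src (hT0 : IsSpanningTree src tgt T0) (hf : f ∈ T0) :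
    side src tgt T0 f (src f) = 0 :=
  if_neg (hT0.not_reach_erase hf)

lemma IsSpanningTree.side_dtgt_sub_side_dsrc (hT0 : IsSpanningTree src tgt T0) {x : E × Bool}
    (hx : x.1 ∈ T0) :
    side src tgt T0 x.1 (dtgt src tgt x) - side src tgt T0 x.1 (dsrc src tgt x) = dirSign x := by
  rcases x with ⟨e, _ | _⟩ <;> simp [dsrc, dtgt, dirSign, side_tgt, hT0.side_src hx]

lemma IsSpanningTree.sum_mul_side_sub [Fintype E] (hT0 : IsSpanningTree src tgt T0)
    (hf : f ∈ T0) (c : E → ℤ) (hc : ∀ e, c e ≠ 0 → e ∈ T0) :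
    ∑ e, c e * (side src tgt T0 f (tgt e) - side src tgt T0 f (src e)) = c f := by
  rw [Finset.sum_eq_single f, side_tgt, hT0.side_src hf, sub_zero, mul_one]
  · intro e _ hef
    by_cases hce : c e = 0
    · rw [hce, zero_mul]
    · rw [side_eq_of_reach (reach_src_tgt (Finset.mem_erase.mpr ⟨hef, hc e hce⟩)), sub_self,
        mul_zero]
  · simp

end Side

lemma sum_mul_bdry [Fintype V] [Fintype E] [DecidableEq V] {src tgt : E → V} (g : V → ℤ)
    (c : E → ℤ) :
    ∑ v, g v * bdry src tgt c v = ∑ e, c e * (g (tgt e) - g (src e)) := by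
  simp only [bdry, Finset.mul_sum]
  rw [Finset.sum_comm]
  refine Finset.sum_congr rfl fun e _ => ?_
  simp [mul_sub, Finset.sum_sub_distrib, mul_ite, Finset.sum_ite_eq, mul_comm]

section PathData

variable [Fintype V] [Fintype E] [DecidableEq V] [DecidableEq E] {src tgt : E → V}
  {T0 : Finset E} {f : E}

lemma IsSpanningTree.D_apply (hT0 : IsSpanningTree src tgt T0)
    {D : {e : E // e ∉ T0} → E → ℤ} (hD : IsPathData src tgt T0 D) (j : {e : E // e ∉ T0})
    (hf : f ∈ T0) :
    D j f = side src tgt T0 f (src (j : E)) - side src tgt T0 f (tgt (j : E)) := by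
  have h := sum_mul_bdry (src := src) (tgt := tgt) (side src tgt T0 f) (Zchain T0 D j)
  simp only [hD.2 j, Pi.zero_apply, mul_zero, Finset.sum_const_zero, Zchain, add_mul,
    Finset.sum_add_distrib, ite_mul, one_mul, zero_mul, Finset.sum_ite_eq', Finset.mem_univ,
    if_true, hT0.sum_mul_side_sub hf (D j) (hD.1 j)] at h
  linarith

end PathData

section Crossing

variable [Fintype V] [DecidableEq E] {src tgt : E → V} {T0 : Finset E}

lemma IsSpanningTree.reach_erase_dsrc_or_dtgt (hT0 : IsSpanningTree src tgt T0)
    {x : E × Bool} (hx : x.1 ∈ T0) (v : V) :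
    Reach src tgt (T0.erase x.1) v (dsrc src tgt x) ∨
      Reach src tgt (T0.erase x.1) v (dtgt src tgt x) := by
  rcases x with ⟨e, _ | _⟩
  · exact (hT0.reach_erase_src_or_tgt hx v).symm
  · exact hT0.reach_erase_src_or_tgt hx v

lemma IsSpanningTree.not_reach_erase_dsrc_dtgt (hT0 : IsSpanningTree src tgt T0)
    {x : E × Bool} (hx : x.1 ∈ T0) :
    ¬ Reach src tgt (T0.erase x.1) (dsrc src tgt x) (dtgt src tgt x) := by
  rcases x with ⟨e, _ | _⟩
  · exact fun h => hT0.not_reach_erase hx (EqvGen.symm _ _ h)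
  · exact hT0.not_reach_erase hx

variable {a b : E × Bool} (hT0 : IsSpanningTree src tgt T0) (ha : a.1 ∈ T0)
  (hb : b.1 ∈ T0.erase a.1)
  (hafter : Reach src tgt (T0.erase a.1) (dtgt src tgt a) (dsrc src tgt b))
  (hbefore : Reach src tgt (T0.erase b.1) (dsrc src tgt a) (dsrc src tgt b))
include hT0 ha hb hafter hbefore

/-- Both ends of `b` lie on the far side of `a`, so the component of `dsrc a` in `T0 - a.1`
avoids `b` and hence lies in one component of `T0 - b.1`. -/
lemma IsSpanningTree.reach_erase_dsrc_of_reach_erase_dsrc {v : V}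
    (hv : Reach src tgt (T0.erase a.1) v (dsrc src tgt a)) :
    Reach src tgt (T0.erase b.1) v (dsrc src tgt b) := by
  have hfar : ∀ w, Reach src tgt (T0.erase a.1) w (dsrc src tgt b) →
      ¬ Reach src tgt ((T0.erase a.1).erase b.1) (dsrc src tgt a) w := fun w hw haw =>
    hT0.not_reach_erase_dsrc_dtgt ha <| EqvGen.trans _ _ _
      (reach_mono (Finset.erase_subset _ _) haw) (EqvGen.trans _ _ _ hw (EqvGen.symm _ _ hafter))
  have hends : Reach src tgt (T0.erase a.1) (src b.1) (dsrc src tgt b) ∧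
      Reach src tgt (T0.erase a.1) (tgt b.1) (dsrc src tgt b) := by
    rcases b with ⟨e, _ | _⟩
    · exact ⟨reach_src_tgt hb, EqvGen.refl _⟩
    · exact ⟨EqvGen.refl _, EqvGen.symm _ _ (reach_src_tgt hb)⟩
  rw [← Finset.insert_erase hb] at hv
  rcases reach_insert_cases (EqvGen.symm _ _ hv) with h | h | h
  · have hsub : (T0.erase a.1).erase b.1 ⊆ T0.erase b.1 := by
      rw [Finset.erase_right_comm]; exact Finset.erase_subset _ _
    exact EqvGen.trans _ _ _ (EqvGen.symm _ _ (reach_mono hsub h)) hbefore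
  · exact absurd h (hfar _ hends.1)
  · exact absurd h (hfar _ hends.2)

lemma IsSpanningTree.side_sub_mul_side_sub {s t : V}
    (hst_a : ¬ Reach src tgt (T0.erase a.1) s t) (hst_b : ¬ Reach src tgt (T0.erase b.1) s t) :
    (side src tgt T0 a.1 s - side src tgt T0 a.1 t) *
        (side src tgt T0 b.1 s - side src tgt T0 b.1 t) = dirSign a * dirSign b := by
  have hb' := Finset.mem_of_mem_erase hb
  wlog hs : Reach src tgt (T0.erase a.1) s (dsrc src tgt a) generalizing s t
  · have ht := (hT0.reach_erase_dsrc_or_dtgt ha t).resolve_right fun ht => hst_a <|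
      EqvGen.trans _ _ _ ((hT0.reach_erase_dsrc_or_dtgt ha s).resolve_left hs) (EqvGen.symm _ _ ht)
    rw [← this (fun h => hst_a (EqvGen.symm _ _ h)) (fun h => hst_b (EqvGen.symm _ _ h)) ht]
    ring
  have ht := (hT0.reach_erase_dsrc_or_dtgt ha t).resolve_left fun ht => hst_a <|
    EqvGen.trans _ _ _ hs (EqvGen.symm _ _ ht)
  have hs' := hT0.reach_erase_dsrc_of_reach_erase_dsrc ha hb hafter hbefore hs
  have ht' := (hT0.reach_erase_dsrc_or_dtgt hb' t).resolve_left fun ht' => hst_b <|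
    EqvGen.trans _ _ _ hs' (EqvGen.symm _ _ ht')
  rw [side_eq_of_reach hs, side_eq_of_reach ht, side_eq_of_reach hs', side_eq_of_reach ht',
    ← hT0.side_dtgt_sub_side_dsrc ha, ← hT0.side_dtgt_sub_side_dsrc hb']
  ring

end Crossing

lemma Ymat_mul_transpose_apply [DecidableEq E] {T0 : Finset E} [Fintype {e : E // e ∉ T0}]
    (D : {e : E // e ∉ T0} → E → ℤ) (p q : {f : E // f ∈ T0}) :
    (Ymat T0 D * (Ymat T0 D)ᵀ) p q = ∑ j, D j p * D j q := by
  simp [Matrix.mul_apply, Ymat]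

lemma sum_mul_eq_mul_card {ι : Type*} [Fintype ι] (x y : ι → ℤ) (c : ℤ)
    (h : ∀ i, x i ≠ 0 → y i ≠ 0 → x i * y i = c) :
    ∑ i, x i * y i = c * Nat.card {i // x i ≠ 0 ∧ y i ≠ 0} := by
  calc ∑ i, x i * y i = ∑ i, if x i ≠ 0 ∧ y i ≠ 0 then c else 0 := by
        refine Finset.sum_congr rfl fun i _ => ?_
        split_ifs with hi
        · exact h i hi.1 hi.2
        · rcases not_and_or.mp hi with hx | hy
          · rw [not_not.mp hx, zero_mul]
          · rw [not_not.mp hy, mul_zero]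
    _ = c * Nat.card {i // x i ≠ 0 ∧ y i ≠ 0} := by
        rw [Finset.sum_ite, Finset.sum_const, Finset.sum_const_zero, add_zero, nsmul_eq_mul,
          mul_comm, Nat.card_eq_fintype_card, Fintype.card_subtype]

section MeshLaplacian

variable [Fintype V] [Fintype E] [DecidableEq V] [DecidableEq E] {src tgt : E → V}
  {T0 : Finset E} {D : {e : E // e ∉ T0} → E → ℤ} (hT0 : IsSpanningTree src tgt T0)
  (hD : IsPathData src tgt T0 D)
include hT0 hD

lemma IsSpanningTree.not_reach_erase_of_D_ne_zero (j : {e : E // e ∉ T0}) {f : E} (hf : f ∈ T0)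
    (h : D j f ≠ 0) : ¬ Reach src tgt (T0.erase f) (src (j : E)) (tgt (j : E)) := fun hr =>
  h (by rw [hT0.D_apply hD j hf, side_eq_of_reach hr, sub_self])

lemma IsSpanningTree.D_mul_self_of_ne_zero (j : {e : E // e ∉ T0}) {f : E} (hf : f ∈ T0)
    (h : D j f ≠ 0) : D j f * D j f = 1 := by
  rw [hT0.D_apply hD j hf] at h ⊢
  rcases side_eq_zero_or_one (src := src) (tgt := tgt) (T0 := T0) (f := f) (src (j : E))
    with h₁ | h₁ <;>
  rcases side_eq_zero_or_one (src := src) (tgt := tgt) (T0 := T0) (f := f) (tgt (j : E))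
    with h₂ | h₂ <;> simp_all

lemma IsSpanningTree.D_mul_D_of_ne_zero {a b : E × Bool} (ha : a.1 ∈ T0)
    (hb : b.1 ∈ T0.erase a.1)
    (hafter : Reach src tgt (T0.erase a.1) (dtgt src tgt a) (dsrc src tgt b))
    (hbefore : Reach src tgt (T0.erase b.1) (dsrc src tgt a) (dsrc src tgt b))
    (j : {e : E // e ∉ T0}) (hja : D j a.1 ≠ 0) (hjb : D j b.1 ≠ 0) :
    D j a.1 * D j b.1 = dirSign a * dirSign b := by
  have hb' := Finset.mem_of_mem_erase hb
  rw [hT0.D_apply hD j ha, hT0.D_apply hD j hb']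
  exact hT0.side_sub_mul_side_sub ha hb hafter hbefore
    (hT0.not_reach_erase_of_D_ne_zero hD j ha hja) (hT0.not_reach_erase_of_D_ne_zero hD j hb' hjb)

end MeshLaplacian

/-- `γ` is the trail `L`; `⟨f_k, γ⟩` and `⟨f_l, γ⟩` are the orientations of its first and
last edges. -/
theorem stmt8_general {V E : Type} [Fintype V] [Fintype E] [DecidableEq V] [DecidableEq E]
    (src tgt : E → V)
    (T0 : Finset E) (hT0 : IsSpanningTree src tgt T0)
    (D : {e : E // e ∉ T0} → E → ℤ) (hD : IsPathData src tgt T0 D)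
    (k l : {f : E // f ∈ T0}) (hkl : k ≠ l)
    (L : List (E × Bool)) (hne : L ≠ [])
    (hchain : L.Chain' fun x y => dtgt src tgt x = dsrc src tgt y)
    (hnodup : (L.map Prod.fst).Nodup)
    (hLT0 : ∀ x ∈ L, x.1 ∈ T0)
    (hhead : (L.head hne).1 = (k : E))
    (hlast : (L.getLast hne).1 = (l : E)) :
    (∀ k' : {f : E // f ∈ T0},
        (Ymat T0 D * (Ymat T0 D)ᵀ) k' k'
          = (Nat.card {j : {e : E // e ∉ T0} // D j (k' : E) ≠ 0} : ℤ))
    ∧ (Ymat T0 D * (Ymat T0 D)ᵀ) k l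
        = ((if (L.head hne).2 then (1 : ℤ) else -1) * (if (L.getLast hne).2 then 1 else -1))
            * (Nat.card {j : {e : E // e ∉ T0} // D j (k : E) ≠ 0 ∧ D j (l : E) ≠ 0} : ℤ) := by
  have hends : (L.head hne).1 ≠ (L.getLast hne).1 := by
    rw [hhead, hlast]
    exact fun h => hkl (Subtype.ext h)
  refine ⟨fun f => ?_, ?_⟩
  · rw [Ymat_mul_transpose_apply,
      sum_mul_eq_mul_card _ _ 1 fun j hj _ => hT0.D_mul_self_of_ne_zero hD j f.2 hj]
    simp
  · rw [Ymat_mul_transpose_apply, ← hhead, ← hlast]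
    exact sum_mul_eq_mul_card _ _ _ <| hT0.D_mul_D_of_ne_zero hD (hLT0 _ (List.head_mem hne))
      (Finset.mem_erase.mpr ⟨hends.symm, hLT0 _ (List.getLast_mem hne)⟩)
      (reach_erase_head_dtgt_dsrc_getLast L hne hchain hnodup hLT0 hends)
      (reach_erase_getLast_dsrc_head_dsrc_getLast L hne hchain hnodup hLT0)

/-- Entries of the mesh Laplacian `Δ(G,T0) = Y·Yᵀ`: the diagonal entry
at a tree edge `f_k` counts the non-tree edges `e` with `f_k` in the support of `D(e)`;
for `k ≠ l`, the `(f_k, f_l)` entry is `Sign(k,l)` times the number of non-tree edges `e`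
with both `f_k` and `f_l` in the support of `D(e)`, where
`Sign(k,l) = ⟨f_k, γ⟩·⟨f_l, γ⟩` for `γ` the unique directed simple path in `T0` from the
edge `f_k` to the edge `f_l` (formalized as a list `L` of directed edges of `T0`,
consecutively incident, with pairwise distinct underlying edges, starting with `f_k`
and ending with `f_l`). -/
theorem stmt8 {V E : Type} [Fintype V] [Fintype E] [DecidableEq V] [DecidableEq E]
    (src tgt : E → V) (hG : ConnectedVia src tgt Finset.univ)
    (T0 : Finset E) (hT0 : IsSpanningTree src tgt T0)
    (D : {e : E // e ∉ T0} → E → ℤ) (hD : IsPathData src tgt T0 D)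
    (k l : {f : E // f ∈ T0}) (hkl : k ≠ l)
    (L : List (E × Bool)) (hne : L ≠ [])
    (hchain : L.Chain' fun x y => dtgt src tgt x = dsrc src tgt y)
    (hnodup : (L.map Prod.fst).Nodup)
    (hLT0 : ∀ x ∈ L, x.1 ∈ T0)
    (hhead : (L.head hne).1 = (k : E))
    (hlast : (L.getLast hne).1 = (l : E)) :
    (∀ k' : {f : E // f ∈ T0},
        (Ymat T0 D * (Ymat T0 D)ᵀ) k' k'
          = (Nat.card {j : {e : E // e ∉ T0} // D j (k' : E) ≠ 0} : ℤ))
    ∧ (Ymat T0 D * (Ymat T0 D)ᵀ) k l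
        = ((if (L.head hne).2 then (1 : ℤ) else -1) * (if (L.getLast hne).2 then 1 else -1))
            * (Nat.card {j : {e : E // e ∉ T0} // D j (k : E) ≠ 0 ∧ D j (l : E) ≠ 0} : ℤ) :=
  stmt8_general src tgt T0 hT0 D hD k l hkl L hne hchain hnodup hLT0 hhead hlast

end Mesh
end

section
/- Let G be a finite connected multigraph with spanning tree T0 and N = |E(G)−E(T0)|, and for 0 ≤ j ≤ N let b_j be the sum, over all subsets {k_1 < … < k_j} of {1,…,N} of size j, of the number of spanning trees of the subgraph T0 ∪ {e_{k_1},…,e_{k_j}}. Then for every 0 ≤ j ≤ N: b_j = Σ_{k=0}^{j} binom(N−k, N−j) · ST_k(G,T0). -/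
/-!
A spanning tree `S` of `G` lies in `T0 ∪ K` exactly when `K` contains the `k` non-tree edges of
`S`, and among the `j`-subsets of the `N` non-tree edges there are `C(N-k, j-k) = C(N-k, N-j)`
such `K`. Double counting the pairs `(K, S)` and grouping the trees by `k` gives the identity;
the terms with `k > j` vanish because then `N - k < N - j`.
-/

open scoped Classical
open Polynomial BigOperators Matrix

namespace Finset

lemma card_filter_powersetCard_subset_eq_choose {α : Type*} [DecidableEq α] {s t : Finset α}
    {n : ℕ} (hts : t ⊆ s) (hn : n ≤ #s) :
    #{K ∈ s.powersetCard n | t ⊆ K} = (#s - #t).choose (#s - n) := by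
  have hst_card := card_le_card hts
  by_cases htn : #t ≤ n
  · rw [card_filter_powersetCard_subset t s n hts htn,
      Nat.choose_symm_of_eq_add (b := #s - n) (by omega)]
  · have hempty : {K ∈ s.powersetCard n | t ⊆ K} = ∅ :=
      filter_eq_empty_iff.2 fun K hK htK =>
        htn ((card_le_card htK).trans_eq (mem_powersetCard.1 hK).2)
    rw [hempty, card_empty, Nat.choose_eq_zero_of_lt]
    omega

lemma sum_card_filter_subset_powersetCard_univ {α β : Type*} [Fintype α] [DecidableEq α]
    (X : Finset β) (g : β → Finset α) {n : ℕ} (hn : n ≤ Fintype.card α) :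
    ∑ K ∈ powersetCard n univ, #{x ∈ X | g x ⊆ K}
      = ∑ x ∈ X, (Fintype.card α - #(g x)).choose (Fintype.card α - n) := by
  refine (sum_card_bipartiteAbove_eq_sum_card_bipartiteBelow (fun x K => g x ⊆ K)).symm.trans
    (sum_congr rfl fun x _ => ?_)
  rw [← card_univ] at hn ⊢
  exact card_filter_powersetCard_subset_eq_choose (subset_univ _) hn

lemma sum_comp_eq_sum_range_card_nsmul {β M : Type*} [AddCommMonoid M] (X : Finset β)
    (g : β → ℕ) (f : ℕ → M) {j : ℕ} (hf : ∀ x ∈ X, j < g x → f (g x) = 0) :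
    ∑ x ∈ X, f (g x) = ∑ k ∈ range (j + 1), #{x ∈ X | g x = k} • f k := by
  calc ∑ x ∈ X, f (g x) = ∑ x ∈ X with g x ≤ j, f (g x) :=
        (sum_filter_of_ne fun x hx hne => not_lt.1 fun h => hne (hf x hx h)).symm
    _ = ∑ k ∈ range (j + 1), ∑ x ∈ {x ∈ X | g x ≤ j} with g x = k, f k :=
        (sum_fiberwise_of_maps_to'
          (fun x hx => mem_range.2 (Nat.lt_succ_of_le (mem_filter.1 hx).2)) f).symm
    _ = ∑ k ∈ range (j + 1), #{x ∈ X | g x = k} • f k := by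
        refine sum_congr rfl fun k hk => ?_
        rw [sum_const, filter_filter]
        congr 2
        ext x
        have := mem_range.1 hk
        grind

end Finset

namespace Mesh

open Finset

variable {V E : Type}

lemma card_subtype_notMem [DecidableEq E] (S T : Finset E) :
    #(S.subtype (· ∉ T)) = #(S \ T) := by
  rw [card_subtype, sdiff_eq_filter]

lemma subset_union_image_val_iff [DecidableEq E] {S T : Finset E} {K : Finset {e // e ∉ T}} :
    S ⊆ T ∪ K.image Subtype.val ↔ S.subtype (· ∉ T) ⊆ K := by
  constructor
  · intro h e he
    obtain ⟨f, hf, hfe⟩ := mem_image.1 ((mem_union.1 (h (mem_subtype.1 he))).resolve_left e.2)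
    rwa [← Subtype.ext hfe]
  · intro h e he
    by_cases heT : e ∈ T
    · exact mem_union_left _ heT
    · exact mem_union_right _ (mem_image_of_mem _ (h (mem_subtype.2 he) : ⟨e, heT⟩ ∈ K))

noncomputable def spanningTreeFinset [Fintype V] [Fintype E] (src tgt : E → V) :
    Finset (Finset E) :=
  {S | IsSpanningTree src tgt S}

lemma natCard_isSpanningTree_and [Fintype V] [Fintype E] (src tgt : E → V)
    (q : Finset E → Prop) :
    Nat.card {S : Finset E // IsSpanningTree src tgt S ∧ q S}
      = #{S ∈ spanningTreeFinset src tgt | q S} := by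
  rw [Nat.card_eq_fintype_card, Fintype.card_subtype, spanningTreeFinset, filter_filter]

lemma STj_eq_card_filter [Fintype V] [Fintype E] [DecidableEq E] (src tgt : E → V)
    (T0 : Finset E) (k : ℕ) :
    STj src tgt T0 k = #{S ∈ spanningTreeFinset src tgt | #(S.subtype (· ∉ T0)) = k} := by
  simp_rw [STj, natCard_isSpanningTree_and, ← card_subtype_notMem]

theorem stmt10_general {V E : Type} [Fintype V] [Fintype E] [DecidableEq E]
    (src tgt : E → V) (T0 : Finset E)
    (N : ℕ) (hN : N = Fintype.card {e : E // e ∉ T0}) :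
    ∀ j : ℕ, j ≤ N →
      (∑ K ∈ Finset.powersetCard j (Finset.univ : Finset {e : E // e ∉ T0}),
          Nat.card {S : Finset E // IsSpanningTree src tgt S ∧ S ⊆ T0 ∪ K.image Subtype.val})
        = ∑ k ∈ Finset.range (j + 1), Nat.choose (N - k) (N - j) * STj src tgt T0 k := by
  intro j hj
  have hcard : ∀ S : Finset E, #(S.subtype (· ∉ T0)) ≤ N := fun S => hN ▸ card_le_univ _
  calc _ = ∑ K ∈ powersetCard j univ,
          #{S ∈ spanningTreeFinset src tgt | S.subtype (· ∉ T0) ⊆ K} := by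
        simp_rw [natCard_isSpanningTree_and, subset_union_image_val_iff]
    _ = ∑ S ∈ spanningTreeFinset src tgt, (N - #(S.subtype (· ∉ T0))).choose (N - j) := by
        rw [sum_card_filter_subset_powersetCard_univ _ _ (hN ▸ hj), hN]
    _ = ∑ k ∈ range (j + 1), STj src tgt T0 k • (N - k).choose (N - j) := by
        simp_rw [STj_eq_card_filter]
        exact sum_comp_eq_sum_range_card_nsmul _ _ (fun k => (N - k).choose (N - j))
          fun S _ hjS => Nat.choose_eq_zero_of_lt (by have := hcard S; omega)
    _ = _ := sum_congr rfl fun k _ => by rw [smul_eq_mul, mul_comm]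

/-- With `b_j` the sum, over all `j`-element subsets `K` of the non-tree
edges, of the number of spanning trees of the subgraph `T0 ∪ K`, one has
`b_j = Σ_{k=0}^{j} C(N-k, N-j) · ST_k(G,T0)` for all `0 ≤ j ≤ N`. -/
theorem stmt10 {V E : Type} [Fintype V] [Fintype E] [DecidableEq V] [DecidableEq E]
    (src tgt : E → V) (hG : ConnectedVia src tgt Finset.univ)
    (T0 : Finset E) (hT0 : IsSpanningTree src tgt T0)
    (N : ℕ) (hN : N = Fintype.card {e : E // e ∉ T0}) :
    ∀ j : ℕ, j ≤ N →
      (∑ K ∈ Finset.powersetCard j (Finset.univ : Finset {e : E // e ∉ T0}),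
          Nat.card {S : Finset E // IsSpanningTree src tgt S ∧ S ⊆ T0 ∪ K.image Subtype.val})
        = ∑ k ∈ Finset.range (j + 1), Nat.choose (N - k) (N - j) * STj src tgt T0 k :=
  stmt10_general src tgt T0 N hN

end Mesh
end

section
/- Let H be a finite graph with n = |V(H)| vertices. Then det(T·Id_n − Δ(H)) = T^n + Σ_{j=1}^{n−1} (−1)^j b_j(H) T^{n−j}, where b_j(H) = Σ_F mult(F), the sum running over all spanning forests F of H with n−j components; equivalently, b_j(H) equals the number of rooted spanning forests of H with n−j components. -/
open scoped Classical
open Polynomial BigOperators Matrix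

namespace Mesh

variable {V E : Type}

/-! Write `Δ = B Bᵀ` with `B` the vertex-edge incidence matrix. The coefficient of `T^(n-j)` in
`det (T - Δ)` is `(-1)^j` times the sum of the principal `j × j` minors of `Δ`, and by
Cauchy–Binet the minor on a vertex set `S` is the sum of `det B[S, F]²` over the `j`-edge sets
`F`. Expanding along the row of a leaf and deleting it shows that `det B[S, F]²` is `1` when
every vertex reaches exactly one vertex outside `S` through `F` (so `F` is a spanning forest
rooted at `Sᶜ`) and `0` otherwise. Rooting a fixed forest means choosing one vertex in each
component, which gives `mult(F)` choices. -/

open Finset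
open scoped Nat

section Incidence

variable {src tgt : E → V} [DecidableEq V]

theorem inc_eq_zero_iff {e : E} {v : V} : inc src tgt e v = 0 ↔ (tgt e = v ↔ src e = v) := by
  unfold inc; split_ifs <;> simp_all

theorem exists_other_end_of_inc_ne_zero {e : E} {v : V} (h : inc src tgt e v ≠ 0) :
    ∃ z ≠ v, (src e = v ∧ tgt e = z) ∨ (src e = z ∧ tgt e = v) := by
  unfold inc at h
  by_cases hs : src e = v
  · exact ⟨tgt e, fun ht => by simp_all, Or.inl ⟨hs, rfl⟩⟩
  · exact ⟨src e, hs, Or.inr ⟨rfl, by simpa [hs] using h⟩⟩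

theorem sq_inc_of_ne_zero {e : E} {v : V} (h : inc src tgt e v ≠ 0) :
    inc src tgt e v ^ 2 = 1 := by
  unfold inc at *; split_ifs at * <;> simp_all

theorem sum_inc_eq_zero [Fintype V] (e : E) : ∑ v, inc src tgt e v = 0 := by
  simp [inc, sum_sub_distrib]

theorem mem_iff_of_inc_eq_zero {S : Set V} {e : E} (h : ∀ v ∉ S, inc src tgt e v = 0) :
    src e ∈ S ↔ tgt e ∈ S := by
  constructor
  · intro hs
    by_contra ht
    exact ht (((inc_eq_zero_iff.1 (h _ ht)).1 rfl) ▸ hs)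
  · intro ht
    by_contra hs
    exact hs (((inc_eq_zero_iff.1 (h _ hs)).2 rfl) ▸ ht)

def incMat (src tgt : E → V) : Matrix V E ℤ := Matrix.of fun v e => inc src tgt e v

theorem lapDegAdj_eq_incMat_mul_transpose [Fintype E] (hloop : ∀ e, src e ≠ tgt e) :
    LapDegAdj src tgt = incMat src tgt * (incMat src tgt)ᵀ := by
  ext a b
  have hterm : ∀ e, inc src tgt e a * inc src tgt e b =
      (if a = b then (if src e = a then 1 else 0) + (if tgt e = a then 1 else 0) else 0) -
        (if (src e = a ∧ tgt e = b) ∨ (src e = b ∧ tgt e = a) then 1 else 0) := by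
    intro e
    have := hloop e
    unfold inc
    split_ifs <;> simp_all
  simp only [LapDegAdj, incMat, Matrix.mul_apply, Matrix.transpose_apply, Matrix.of_apply, hterm,
    sum_sub_distrib, card_filter]
  split_ifs <;> simp [sum_add_distrib]

end Incidence

section Reach

variable {src tgt : E → V} {T T' : Finset E} {a b : V}

theorem Reach.mem_iff_mem {S : Set V} (hS : ∀ e ∈ T, src e ∈ S ↔ tgt e ∈ S)
    (h : Reach src tgt T a b) : a ∈ S ↔ b ∈ S := by
  induction h with
  | rel x y hxy =>
    obtain ⟨e, he, ⟨rfl, rfl⟩ | ⟨rfl, rfl⟩⟩ := hxy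
    · exact hS e he
    · exact (hS e he).symm
  | refl => exact Iff.rfl
  | symm _ _ _ ih => exact ih.symm
  | trans _ _ _ _ _ ih₁ ih₂ => exact ih₁.trans ih₂

theorem Reach.mono (hTT' : T ⊆ T') (h : Reach src tgt T a b) : Reach src tgt T' a b :=
  Relation.EqvGen.mono (fun _ _ ⟨e, he, h⟩ => ⟨e, hTT' he, h⟩) _ _ h

theorem Reach.eq_of_inc_eq_zero [DecidableEq V] {v w : V} (hv : ∀ e ∈ T, inc src tgt e v = 0)
    (h : Reach src tgt T v w) : w = v :=
  (h.mem_iff_mem (S := {v}) fun e he => (inc_eq_zero_iff.1 (hv e he)).symm).1 rfl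

end Reach

def IsRootSet (src tgt : E → V) (F : Finset E) (R : Finset V) : Prop :=
  ∀ v, ∃! u, u ∈ R ∧ Reach src tgt F u v

section RootSet

variable {src tgt : E → V} {T : Finset E} {R : Finset V}

theorem not_isRootSet_of_forall_mem_iff {S : Set V} (hS : ∀ e ∈ T, src e ∈ S ↔ tgt e ∈ S)
    {w : V} (hw : w ∈ S) (hRS : ∀ u ∈ R, u ∉ S) : ¬IsRootSet src tgt T R := fun h =>
  have ⟨u, ⟨huR, hu⟩, _⟩ := h w
  hRS u huR ((hu.mem_iff_mem hS).2 hw)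

variable [DecidableEq V]

/-- Contracting the leaf `v` onto its neighbour `z` does not change reachability from `u ≠ v`. -/
theorem reach_iff_reach_erase_of_leaf {t : E} {v z u w : V} (ht : t ∈ T)
    (htz : (src t = v ∧ tgt t = z) ∨ (src t = z ∧ tgt t = v)) (hzv : z ≠ v)
    (hv : ∀ e ∈ T, e ≠ t → inc src tgt e v = 0) (huv : u ≠ v) :
    Reach src tgt T u w ↔ Reach src tgt (T.erase t) u (if w = v then z else w) := by
  set T' := T.erase t
  have hstep : Reach src tgt T z v := by
    obtain ⟨hs, ht'⟩ | ⟨hs, ht'⟩ := htz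
    · exact Relation.EqvGen.rel _ _ ⟨t, ht, Or.inr ⟨hs, ht'⟩⟩
    · exact Relation.EqvGen.rel _ _ ⟨t, ht, Or.inl ⟨hs, ht'⟩⟩
  constructor
  · intro h
    refine (h.mem_iff_mem (S := {x | Reach src tgt T' u (if x = v then z else x)}) ?_).1 ?_
    · intro e he
      by_cases het : e = t
      · subst het
        obtain ⟨hs, ht'⟩ | ⟨hs, ht'⟩ := htz <;> simp [hs, ht', hzv]
      have hev := inc_eq_zero_iff.1 (hv e he het)
      by_cases hsv : src e = v
      · simp [hsv, hev.2 hsv]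
      have htv : tgt e ≠ v := fun h => hsv (hev.1 h)
      have hstep' : Reach src tgt T' (src e) (tgt e) :=
        Relation.EqvGen.rel _ _ ⟨e, mem_erase.2 ⟨het, he⟩, Or.inl ⟨rfl, rfl⟩⟩
      simp only [Set.mem_ofPred_eq, if_neg hsv, if_neg htv]
      exact ⟨fun h => h.trans _ _ _ hstep', fun h => h.trans _ _ _ hstep'.symm⟩
    · simp only [Set.mem_ofPred_eq, if_neg huv]
      exact Relation.EqvGen.refl u
  · intro h
    split_ifs at h with hwv
    · exact hwv ▸ (h.mono (erase_subset t T)).trans _ _ _ hstep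
    · exact h.mono (erase_subset t T)

theorem isRootSet_iff_erase_leaf {t : E} {v : V} (hvR : v ∉ R) (ht : t ∈ T)
    (hvt : inc src tgt t v ≠ 0) (hv : ∀ e ∈ T, e ≠ t → inc src tgt e v = 0) :
    IsRootSet src tgt T R ↔ IsRootSet src tgt (T.erase t) (insert v R) := by
  obtain ⟨z, hzv, htz⟩ := exists_other_end_of_inc_ne_zero hvt
  have hiso : ∀ e ∈ T.erase t, inc src tgt e v = 0 := fun e he =>
    hv e (mem_of_mem_erase he) (ne_of_mem_erase he)
  have hne : ∀ {u}, u ∈ R → u ≠ v := fun hu huv => hvR (huv ▸ hu)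
  have key : ∀ {u} w, u ∈ R → (Reach src tgt T u w ↔
      Reach src tgt (T.erase t) u (if w = v then z else w)) := fun w hu =>
    reach_iff_reach_erase_of_leaf ht htz hzv hv (hne hu)
  constructor
  · intro h w
    by_cases hwv : w = v
    · subst hwv
      refine ⟨w, ⟨mem_insert_self w R, Relation.EqvGen.refl w⟩, fun u ⟨_, hu⟩ => ?_⟩
      exact Reach.eq_of_inc_eq_zero hiso (Relation.EqvGen.symm _ _ hu)
    obtain ⟨u, ⟨huR, hu⟩, huniq⟩ := h w
    refine ⟨u, ⟨mem_insert_of_mem huR, by simpa [hwv] using (key w huR).1 hu⟩, ?_⟩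
    rintro u' ⟨hu'R, hu'⟩
    have hu'v : u' ≠ v := fun h => hwv (Reach.eq_of_inc_eq_zero hiso (h ▸ hu'))
    have hu'R : u' ∈ R := (mem_insert.1 hu'R).resolve_left hu'v
    exact huniq u' ⟨hu'R, (key w hu'R).2 (by simpa [hwv] using hu')⟩
  · intro h w
    set w' := if w = v then z else w
    have hw'v : w' ≠ v := by unfold w'; split_ifs with hwv <;> [exact hzv; exact hwv]
    have hroot : ∀ {u}, u ∈ insert v R → Reach src tgt (T.erase t) u w' → u ∈ R :=
      fun hu hreach => (mem_insert.1 hu).resolve_left fun huv =>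
        hw'v (Reach.eq_of_inc_eq_zero hiso (huv ▸ hreach))
    obtain ⟨u, ⟨huR, hu⟩, huniq⟩ := h w'
    refine ⟨u, ⟨hroot huR hu, (key w (hroot huR hu)).2 hu⟩, fun u' ⟨hu'R, hu'⟩ => ?_⟩
    exact huniq u' ⟨mem_insert_of_mem hu'R, (key w hu'R).1 hu'⟩

end RootSet

section Components

variable {src tgt : E → V} {F : Finset E} {R : Finset V}

theorem IsRootSet.eq_of_reach (h : IsRootSet src tgt F R) {u u' : V} (hu : u ∈ R) (hu' : u' ∈ R)
    (hr : Reach src tgt F u u') : u = u' :=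
  (h u').unique ⟨hu, hr⟩ ⟨hu', Relation.EqvGen.refl u'⟩

theorem mk_reachSetoid_eq_iff {u v : V} :
    Quotient.mk (reachSetoid src tgt F) u = Quotient.mk _ v ↔ Reach src tgt F u v :=
  Quotient.eq

theorem ncomp_eq_card_of_isRootSet (h : IsRootSet src tgt F R) : ncomp src tgt F = R.card := by
  have hbij : Function.Bijective fun u : R => Quotient.mk (reachSetoid src tgt F) u.1 := by
    refine ⟨fun u u' huu' =>
      Subtype.ext (h.eq_of_reach u.2 u'.2 (mk_reachSetoid_eq_iff.1 huu')), ?_⟩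
    refine Quotient.ind fun v => ?_
    obtain ⟨u, ⟨huR, hu⟩, -⟩ := h v
    exact ⟨⟨u, huR⟩, mk_reachSetoid_eq_iff.2 hu⟩
  rw [ncomp, ← Nat.card_congr (Equiv.ofBijective _ hbij), Nat.card_eq_fintype_card,
    Fintype.card_coe]

theorem isRootedSF_iff [Fintype V] :
    IsRootedSF src tgt F R ↔ F.card + R.card = Fintype.card V ∧ IsRootSet src tgt F R :=
  ⟨fun h => ⟨ncomp_eq_card_of_isRootSet h.2 ▸ h.1, h.2⟩,
    fun h => ⟨by rw [IsSpForest, ncomp_eq_card_of_isRootSet h.2, h.1], h.2⟩⟩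

theorem card_isRootSet [Fintype V] (F : Finset E) :
    Nat.card {R : Finset V // IsRootSet src tgt F R} = multF src tgt F := by
  let Φ : (∀ q, {v // Quotient.mk (reachSetoid src tgt F) v = q}) →
      {R : Finset V // IsRootSet src tgt F R} := fun σ =>
    ⟨univ.image fun q => (σ q).1, fun v => by
      refine ⟨σ (Quotient.mk _ v), ⟨mem_image_of_mem _ (mem_univ _),
        mk_reachSetoid_eq_iff.1 (σ (Quotient.mk _ v)).2⟩, ?_⟩
      rintro _ ⟨hu, hr⟩
      obtain ⟨q, -, rfl⟩ := mem_image.1 hu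
      rw [← mk_reachSetoid_eq_iff.2 hr, (σ q).2]⟩
  have hΦ : Function.Bijective Φ := by
    refine ⟨fun σ σ' h => funext fun q => ?_, fun ⟨R, hR⟩ => ?_⟩
    · have hq : (σ q).1 ∈ univ.image fun q => (σ' q).1 := by
        rw [show (univ.image fun q => (σ' q).1) = _ from congrArg Subtype.val h.symm]
        exact mem_image_of_mem _ (mem_univ q)
      obtain ⟨q', -, hq'⟩ := mem_image.1 hq
      obtain rfl : q' = q := by rw [← (σ' q').2, hq', (σ q).2]
      exact Subtype.ext hq'.symm
    · choose root hroot using fun q : Quotient (reachSetoid src tgt F) => (hR q.out).exists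
      refine ⟨fun q => ⟨root q, by rw [mk_reachSetoid_eq_iff.2 (hroot q).2, Quotient.out_eq]⟩,
        Subtype.ext (Finset.ext fun r => ⟨?_, fun hr => ?_⟩)⟩
      · rintro hr
        obtain ⟨q, -, rfl⟩ := mem_image.1 hr
        exact (hroot q).1
      · refine mem_image.2 ⟨Quotient.mk _ r, mem_univ _, hR.eq_of_reach (hroot _).1 hr ?_⟩
        exact mk_reachSetoid_eq_iff.1
          ((mk_reachSetoid_eq_iff.2 (hroot (Quotient.mk _ r)).2).trans (Quotient.out_eq _))
  rw [← Nat.card_congr (Equiv.ofBijective Φ hΦ), Nat.card_pi, multF, finprod_eq_prod_of_fintype]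

theorem ncomp_pos [Finite V] [Nonempty V] (F : Finset E) : 0 < ncomp src tgt F :=
  have : Nonempty (Quotient (reachSetoid src tgt F)) := .map (Quotient.mk _) ‹_›
  Nat.card_pos

theorem isRootedSF_and_ncomp_eq_iff [Fintype V] [DecidableEq V] {j : ℕ}
    (hj : j ≤ Fintype.card V) :
    IsRootedSF src tgt F R ∧ ncomp src tgt F = Fintype.card V - j ↔
      F.card = j ∧ Rᶜ.card = j ∧ IsRootSet src tgt F R := by
  rw [isRootedSF_iff, card_compl]
  have := card_le_univ R
  constructor
  · rintro ⟨⟨hcard, hR⟩, hn⟩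
    rw [ncomp_eq_card_of_isRootSet hR] at hn
    exact ⟨by omega, by omega, hR⟩
  · rintro ⟨hF, hR, hroot⟩
    rw [ncomp_eq_card_of_isRootSet hroot]
    exact ⟨⟨by omega, hroot⟩, by omega⟩

end Components

section CauchyBinet

variable {ι κ A : Type} [Fintype ι] [DecidableEq ι] [Fintype κ] [CommRing A]

theorem _root_.Matrix.det_mul_eq_sum_prod_mul_det (M : Matrix ι κ A) (N : Matrix κ ι A) :
    (M * N).det = ∑ f : ι → κ, (∏ i, N (f i) i) * (M.submatrix id f).det := by
  simp_rw [Matrix.det_apply', Matrix.mul_apply, prod_univ_sum, Fintype.piFinset_univ, mul_sum]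
  rw [sum_comm]
  refine sum_congr rfl fun f _ => sum_congr rfl fun σ _ => ?_
  simp only [Matrix.submatrix_apply, id_eq, prod_mul_distrib]
  ring

/-- Cauchy–Binet, summed over all maps `ι → κ` instead of over subsets; averaging over the
column permutations produces the factor `|ι|!`. -/
theorem _root_.Matrix.factorial_mul_det_mul (M : Matrix ι κ A) (N : Matrix κ ι A) :
    ((Fintype.card ι)! : A) * (M * N).det =
      ∑ f : ι → κ, (M.submatrix id f).det * (N.submatrix f id).det := by
  set g : (ι → κ) → A := fun f => (∏ i, N (f i) i) * (M.submatrix id f).det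
  have hg : ∀ (f : ι → κ) (σ : Equiv.Perm ι), g (f ∘ σ) =
      (M.submatrix id f).det * (Equiv.Perm.sign σ * ∏ i, N.submatrix f id (σ i) i) := by
    intro f σ
    have hsub : M.submatrix id (f ∘ σ) = (M.submatrix id f).submatrix id σ := rfl
    simp only [g, hsub, Matrix.det_permute', Matrix.submatrix_apply, id_eq, Function.comp_apply]
    ring
  calc ((Fintype.card ι)! : A) * (M * N).det = ∑ _σ : Equiv.Perm ι, ∑ f, g f := by
        rw [sum_const, card_univ, Fintype.card_perm, nsmul_eq_mul,
          Matrix.det_mul_eq_sum_prod_mul_det]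
    _ = ∑ σ : Equiv.Perm ι, ∑ f, g (f ∘ σ) :=
        sum_congr rfl fun σ _ => (Equiv.sum_comp (σ.symm.arrowCongr (Equiv.refl κ)) g).symm
    _ = _ := by
        rw [sum_comm]
        simp_rw [hg, ← mul_sum, ← Matrix.det_apply']

end CauchyBinet

theorem card_filter_injective_image {ι κ : Type} [Fintype ι] [DecidableEq ι] [Fintype κ]
    (P : Finset κ → Prop) :
    #{f : ι → κ | f.Injective ∧ P (univ.image f)} =
      #{T : Finset κ | T.card = Fintype.card ι ∧ P T} * (Fintype.card ι)! := by
  rw [card_eq_sum_card_fiberwise (f := fun f => univ.image f)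
    (t := {T : Finset κ | T.card = Fintype.card ι ∧ P T}) fun f hf => by
      simp only [coe_filter, mem_univ, true_and, Set.mem_ofPred_eq] at hf ⊢
      exact ⟨by rw [card_image_of_injective _ hf.1, card_univ], hf.2⟩]
  refine sum_const_nat fun T hT => ?_
  have hTcard : Fintype.card ι = Fintype.card T := by simp [(mem_filter.1 hT).2.1]
  have hfib : ({f : ι → κ | f.Injective ∧ P (univ.image f)} : Finset _).filter
      (fun f => univ.image f = T) =
      univ.map ⟨fun σ : ι ≃ T => Subtype.val ∘ σ, fun σ σ' h =>
        Equiv.ext fun i => Subtype.ext (congrFun h i)⟩ := by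
    ext f
    simp only [mem_filter, mem_univ, true_and, mem_map]
    constructor
    · rintro ⟨⟨hf, -⟩, rfl⟩
      refine ⟨Equiv.ofBijective (fun i => ⟨f i, mem_image_of_mem f (mem_univ i)⟩) ?_, rfl⟩
      rw [Fintype.bijective_iff_injective_and_card]
      exact ⟨fun i j h => hf (congrArg Subtype.val h), hTcard⟩
    · rintro ⟨σ, rfl⟩
      have himage : univ.image (Subtype.val ∘ σ) = T := by
        ext x
        simp only [mem_image, mem_univ, true_and, Function.comp_apply]
        exact ⟨by rintro ⟨i, rfl⟩; exact (σ i).2,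
          fun hx => ⟨σ.symm ⟨x, hx⟩, by simp⟩⟩
      refine ⟨⟨Subtype.val_injective.comp σ.injective, ?_⟩, himage⟩
      change P (univ.image (Subtype.val ∘ σ))
      rw [himage]
      exact (mem_filter.1 hT).2.2
  rw [hfib, card_map, card_univ, Fintype.card_equiv (Fintype.equivOfCardEq hTcard)]

theorem image_comp_succAbove {α : Type} [DecidableEq α] {k : ℕ} {f : Fin (k + 1) → α}
    (hf : f.Injective) (i : Fin (k + 1)) :
    univ.image (f ∘ i.succAbove) = (univ.image f).erase (f i) := by
  rw [← image_image, Fin.image_succAbove_univ, compl_singleton, image_erase hf]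

section DetIncidence

variable {src tgt : E → V} [Fintype V] [DecidableEq V]

/-- Double counting: each column has at most two nonzero entries. -/
theorem inc_eq_zero_of_two_le_card {k : ℕ} {r : Fin k → V} (hr : r.Injective)
    {c : Fin k → E} (h : ∀ i, 2 ≤ #{j | inc src tgt (c j) (r i) ≠ 0}) (j : Fin k) {v : V}
    (hv : v ∉ univ.image r) : inc src tgt (c j) v = 0 := by
  set d : V → ℕ := fun v => #{j | inc src tgt (c j) v ≠ 0}
  have hcol : ∀ j, #{v | inc src tgt (c j) v ≠ 0} ≤ 2 := fun j => by
    refine (card_le_card fun v hv => ?_).trans (card_le_two (a := src (c j)) (b := tgt (c j)))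
    obtain ⟨z, -, h | h⟩ := exists_other_end_of_inc_ne_zero (mem_filter.1 hv).2 <;>
      simp [h.1, h.2]
  have hall : ∑ v, d v ≤ 2 * k := calc
    ∑ v, d v = ∑ j, #{v | inc src tgt (c j) v ≠ 0} := by
      simp only [d, card_filter]
      exact sum_comm
    _ ≤ ∑ _j : Fin k, 2 := sum_le_sum fun j _ => hcol j
    _ = 2 * k := by simp [mul_comm]
  have hrows : 2 * k ≤ ∑ v ∈ univ.image r, d v := calc
    2 * k = ∑ _i : Fin k, 2 := by simp [mul_comm]
    _ ≤ ∑ i, d (r i) := sum_le_sum fun i _ => h i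
    _ = ∑ v ∈ univ.image r, d v := (sum_image fun _ _ _ _ h => hr h).symm
  have hout : ∑ v ∈ (univ.image r)ᶜ, d v = 0 := by
    have := sum_add_sum_compl (univ.image r) d
    omega
  have hdv := card_eq_zero.1 ((sum_eq_zero_iff.1 hout) v (mem_compl.2 hv))
  exact not_not.1 (filter_eq_empty_iff.1 hdv (mem_univ j))

theorem sq_det_submatrix_incMat_of_row_eq_zero {k : ℕ} {r : Fin k → V} {c : Fin k → E}
    (i : Fin k) (hi : ∀ j, inc src tgt (c j) (r i) = 0) :
    ((incMat src tgt).submatrix r c).det ^ 2 =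
      if IsRootSet src tgt (univ.image c) (univ.image r)ᶜ then 1 else 0 := by
  rw [Matrix.det_eq_zero_of_row_eq_zero i hi, if_neg, zero_pow two_ne_zero]
  refine not_isRootSet_of_forall_mem_iff (S := {r i}) ?_ rfl fun u hu hui => ?_
  · rintro _ he
    obtain ⟨j, -, rfl⟩ := mem_image.1 he
    exact (inc_eq_zero_iff.1 (hi j)).symm
  · exact mem_compl.1 hu (hui ▸ mem_image_of_mem r (mem_univ i))

theorem sq_det_submatrix_incMat_of_two_le_card {k : ℕ} {r : Fin (k + 1) → V} (hr : r.Injective)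
    {c : Fin (k + 1) → E} (h : ∀ i, 2 ≤ #{j | inc src tgt (c j) (r i) ≠ 0}) :
    ((incMat src tgt).submatrix r c).det ^ 2 =
      if IsRootSet src tgt (univ.image c) (univ.image r)ᶜ then 1 else 0 := by
  have hout := inc_eq_zero_of_two_le_card hr h
  have hcols : (fun _ => 1) ᵥ* (incMat src tgt).submatrix r c = 0 := funext fun j => by
    simp only [Matrix.vecMul, dotProduct, one_mul, Pi.zero_apply]
    rw [← sum_inc_eq_zero (src := src) (tgt := tgt) (c j),
      ← sum_subset (subset_univ (univ.image r)) fun v _ hv => hout j hv,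
      sum_image fun _ _ _ _ h => hr h]
    rfl
  rw [Matrix.exists_vecMul_eq_zero_iff.1 ⟨_, Function.ne_iff.2 ⟨0, one_ne_zero⟩, hcols⟩,
    if_neg, zero_pow two_ne_zero]
  refine not_isRootSet_of_forall_mem_iff (S := ↑(univ.image r)) ?_
    (mem_image_of_mem r (mem_univ 0)) fun u hu => mem_compl.1 hu
  rintro _ he
  obtain ⟨j, -, rfl⟩ := mem_image.1 he
  exact mem_iff_of_inc_eq_zero fun v hv => hout j hv

theorem sq_det_submatrix_incMat {k : ℕ} (r : Fin k → V) (c : Fin k → E) (hr : r.Injective)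
    (hc : c.Injective) :
    ((incMat src tgt).submatrix r c).det ^ 2 =
      if IsRootSet src tgt (univ.image c) (univ.image r)ᶜ then 1 else 0 := by
  induction k with
  | zero =>
    rw [Matrix.det_isEmpty, one_pow, if_pos]
    intro v
    refine ⟨v, ⟨mem_compl.2 (by simp), Relation.EqvGen.refl v⟩, fun u ⟨_, hu⟩ => ?_⟩
    exact (Reach.eq_of_inc_eq_zero (by simp) hu).symm
  | succ k ih =>
    by_cases hzero : ∃ i, ∀ j, inc src tgt (c j) (r i) = 0
    · obtain ⟨i, hi⟩ := hzero
      exact sq_det_submatrix_incMat_of_row_eq_zero i hi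
    by_cases hleaf : ∃ i j, inc src tgt (c j) (r i) ≠ 0 ∧
        ∀ j', j' ≠ j → inc src tgt (c j') (r i) = 0
    · obtain ⟨i, j, hij, hi⟩ := hleaf
      have hdet : ((incMat src tgt).submatrix r c).det = (-1) ^ (i + j : ℕ) *
          inc src tgt (c j) (r i) *
            ((incMat src tgt).submatrix (r ∘ i.succAbove) (c ∘ j.succAbove)).det := by
        rw [Matrix.det_succ_row _ i, sum_eq_single j (fun j' _ hj' => by simp [incMat, hi j' hj'])
          (by simp)]
        rfl
      rw [hdet, mul_pow, mul_pow, sq_inc_of_ne_zero hij,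
        ih _ _ (hr.comp Fin.succAbove_right_injective) (hc.comp Fin.succAbove_right_injective),
        image_comp_succAbove hr, image_comp_succAbove hc, compl_erase,
        ← isRootSet_iff_erase_leaf (by simp) (mem_image_of_mem c (mem_univ j)) hij]
      · simp [← pow_mul]
      · rintro _ he hne
        obtain ⟨j', -, rfl⟩ := mem_image.1 he
        exact hi j' fun h => hne (h ▸ rfl)
    push Not at hzero hleaf
    refine sq_det_submatrix_incMat_of_two_le_card hr fun i => ?_
    obtain ⟨j, hj⟩ := hzero i
    obtain ⟨j', hj'j, hj'⟩ := hleaf i j hj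
    exact one_lt_card.2 ⟨j, by simpa using hj, j', by simpa using hj', hj'j.symm⟩

end DetIncidence

section MatrixTree

variable {src tgt : E → V} [Fintype V] [Fintype E] [DecidableEq V]

theorem det_submatrix_lapDegAdj (hloop : ∀ e, src e ≠ tgt e) (s : Finset V) :
    ((LapDegAdj src tgt).submatrix ((↑) : s → V) (↑)).det =
      #{T : Finset E | T.card = s.card ∧ IsRootSet src tgt T sᶜ} := by
  set k := s.card
  set r : Fin k → V := (↑) ∘ s.equivFin.symm
  have hr : r.Injective := Subtype.val_injective.comp s.equivFin.symm.injective
  have himage : univ.image r = s := by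
    ext v
    simp only [mem_image, mem_univ, true_and, r, Function.comp_apply]
    exact ⟨by rintro ⟨i, rfl⟩; exact coe_mem _,
      fun hv => ⟨s.equivFin ⟨v, hv⟩, by simp⟩⟩
  set B := (incMat src tgt).submatrix r id
  have hsq : ∀ f : Fin k → E, (B.submatrix id f).det * (Bᵀ.submatrix f id).det =
      if f.Injective ∧ IsRootSet src tgt (univ.image f) sᶜ then 1 else 0 := fun f => by
    rw [← Matrix.transpose_submatrix, Matrix.det_transpose, ← sq, ← himage]
    by_cases hf : f.Injective
    · rw [if_congr (and_iff_right hf) rfl rfl]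
      exact sq_det_submatrix_incMat r f hr hf
    · obtain ⟨i, j, hfij, hij⟩ := Function.not_injective_iff.1 hf
      rw [Matrix.det_zero_of_column_eq hij fun i' => by simp [B, hfij], if_neg fun h => hf h.1,
        zero_pow two_ne_zero]
  refine mul_left_cancel₀ (Nat.cast_ne_zero.2 k.factorial_ne_zero : (k ! : ℤ) ≠ 0) ?_
  calc (k ! : ℤ) * ((LapDegAdj src tgt).submatrix ((↑) : s → V) (↑)).det
      = (Fintype.card (Fin k))! * (B * Bᵀ).det := by
        rw [Fintype.card_fin, ← Matrix.det_submatrix_equiv_self s.equivFin.symm,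
          lapDegAdj_eq_incMat_mul_transpose hloop]
        rfl
    _ = #{f : Fin k → E | f.Injective ∧ IsRootSet src tgt (univ.image f) sᶜ} := by
        rw [Matrix.factorial_mul_det_mul, sum_congr rfl fun f _ => hsq f, sum_boole]
    _ = _ := by
        have := card_filter_injective_image (ι := Fin k)
          (fun T : Finset E => IsRootSet src tgt T sᶜ)
        rw [Fintype.card_fin] at this
        -- `convert` reconciles the decidability instances of the two filters
        convert congrArg (Nat.cast : ℕ → ℤ) this using 1
        push_cast
        ring

end MatrixTree

section Counting

variable {src tgt : E → V} [Fintype V] [Fintype E]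

theorem card_rootedSF_eq_sum_multF (K : ℕ) :
    Nat.card {p : Finset E × Finset V //
        IsRootedSF src tgt p.1 p.2 ∧ ncomp src tgt p.1 = K} =
      ∑ F ∈ Finset.univ.filter
          (fun F : Finset E => IsSpForest src tgt F ∧ ncomp src tgt F = K),
          multF src tgt F := by
  rw [Nat.card_eq_fintype_card, Fintype.card_subtype, card_eq_sum_card_fiberwise (f := Prod.fst)
    (t := univ.filter fun F : Finset E => IsSpForest src tgt F ∧ ncomp src tgt F = K)
    fun p hp => by
      simp only [mem_coe, mem_filter, mem_univ, true_and] at hp ⊢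
      exact ⟨hp.1.1, hp.2⟩]
  refine sum_congr rfl fun F hF => ?_
  rw [mem_filter] at hF
  rw [← card_isRootSet F, Nat.card_eq_fintype_card, Fintype.card_subtype]
  refine card_nbij' Prod.snd (fun R => (F, R)) ?_ ?_ ?_ fun R _ => rfl
  · rintro ⟨F', R⟩ h
    simp only [mem_coe, mem_filter, mem_univ, true_and] at h ⊢
    exact h.2 ▸ h.1.1.2
  · intro R hR
    simp only [mem_coe, mem_filter, mem_univ, true_and, and_true] at hR ⊢
    exact ⟨And.intro hF.2.1 hR, hF.2.2⟩
  · rintro ⟨F', R⟩ h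
    simp only [mem_coe, mem_filter, mem_univ, true_and] at h
    rw [← h.2]

variable [DecidableEq V]

theorem card_rootedSF_eq_sum_powersetCard {j : ℕ} (hj : j ≤ Fintype.card V) :
    Nat.card {p : Finset E × Finset V //
        IsRootedSF src tgt p.1 p.2 ∧ ncomp src tgt p.1 = Fintype.card V - j} =
      ∑ s ∈ powersetCard j univ, #{T : Finset E | T.card = j ∧ IsRootSet src tgt T sᶜ} := by
  simp_rw [Nat.card_eq_fintype_card, Fintype.card_subtype, isRootedSF_and_ncomp_eq_iff hj]
  rw [card_eq_sum_card_fiberwise (f := fun p => p.2ᶜ) (t := powersetCard j univ) fun p hp => by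
    simp only [mem_coe, mem_filter, mem_univ, true_and, mem_powersetCard, subset_univ] at hp ⊢
    exact hp.2.1]
  refine sum_congr rfl fun s hs => card_nbij' Prod.fst (fun T => (T, sᶜ)) ?_ ?_ ?_ fun T _ => rfl
  · rintro ⟨T, R⟩ h
    simp only [mem_coe, mem_filter, mem_univ, true_and] at h ⊢
    obtain ⟨⟨hT, -, hroot⟩, rfl⟩ := h
    rw [compl_compl]
    exact ⟨hT, hroot⟩
  · intro T hT
    simp only [mem_coe, mem_filter, mem_univ, true_and, mem_powersetCard, subset_univ] at hT hs ⊢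
    exact ⟨⟨hT.1, by rwa [compl_compl], hT.2⟩, compl_compl s⟩
  · rintro ⟨T, R⟩ h
    simp only [mem_coe, mem_filter, mem_univ, true_and] at h
    rw [← h.2, compl_compl]

end Counting

theorem _root_.Polynomial.Monic.eq_X_pow_add_sum_Icc {R : Type} [CommSemiring R] {p : R[X]}
    {n : ℕ} (hp : p.Monic) (hdeg : p.natDegree = n) (h0 : 0 < n → p.coeff 0 = 0) :
    p = X ^ n + ∑ j ∈ Icc 1 (n - 1), C (p.coeff (n - j)) * X ^ (n - j) := by
  conv_lhs => rw [p.as_sum_range_C_mul_X_pow, hdeg, ← sum_range_reflect]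
  simp only [add_tsub_cancel_right]
  have hlead : p.coeff n = 1 := hdeg ▸ hp.leadingCoeff
  rcases n with _ | m
  · simp [hlead]
  have hrange : range (m + 1 + 1) = insert 0 (insert (m + 1) (Icc 1 m)) := by
    ext j
    simp only [mem_range, mem_insert, mem_Icc]
    omega
  rw [hrange, sum_insert (by simp), sum_insert (by simp), Nat.sub_self, h0 m.succ_pos,
    add_tsub_cancel_right, Nat.sub_zero, hlead]
  simp

section CharPoly

variable {src tgt : E → V} [Fintype V] [Fintype E] [DecidableEq V]

theorem coeff_charpoly_lapDegAdj (hloop : ∀ e, src e ≠ tgt e) {j : ℕ}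
    (hj : j ≤ Fintype.card V) :
    (LapDegAdj src tgt).charpoly.coeff (Fintype.card V - j) =
      (-1) ^ j * (Nat.card {p : Finset E × Finset V //
        IsRootedSF src tgt p.1 p.2 ∧ ncomp src tgt p.1 = Fintype.card V - j} : ℤ) := by
  rw [Matrix.charpoly_coeff_eq_sum_minors _ _ hj, card_rootedSF_eq_sum_powersetCard hj,
    Nat.cast_sum]
  refine congrArg _ (sum_congr rfl fun s hs => ?_)
  rw [det_submatrix_lapDegAdj hloop, (mem_powersetCard.1 hs).2]

end CharPoly

theorem stmt13_general {V E : Type} [Fintype V] [Fintype E] [DecidableEq V]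
    (src tgt : E → V) (hloopfree : ∀ e : E, src e ≠ tgt e)
    (n : ℕ) (hn : n = Fintype.card V) :
    (LapDegAdj src tgt).charpoly
        = Polynomial.X ^ n + ∑ j ∈ Finset.Icc 1 (n - 1),
            Polynomial.C ((-1 : ℤ) ^ j *
                (Nat.card {p : Finset E × Finset V //
                    IsRootedSF src tgt p.1 p.2 ∧ ncomp src tgt p.1 = n - j} : ℤ))
              * Polynomial.X ^ (n - j)
    ∧ ∀ K : ℕ,
        Nat.card {p : Finset E × Finset V //
            IsRootedSF src tgt p.1 p.2 ∧ ncomp src tgt p.1 = K}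
          = ∑ F ∈ Finset.univ.filter
              (fun F : Finset E => IsSpForest src tgt F ∧ ncomp src tgt F = K),
              multF src tgt F := by
  subst hn
  refine ⟨?_, card_rootedSF_eq_sum_multF⟩
  have hcoeff0 : 0 < Fintype.card V → (LapDegAdj src tgt).charpoly.coeff 0 = 0 := fun hV => by
    have : Nonempty V := Fintype.card_pos_iff.1 hV
    have : IsEmpty {p : Finset E × Finset V //
        IsRootedSF src tgt p.1 p.2 ∧ ncomp src tgt p.1 = 0} :=
      ⟨fun p => (ncomp_pos p.1.1).ne' p.2.2⟩
    rw [← Nat.sub_self (Fintype.card V), coeff_charpoly_lapDegAdj hloopfree le_rfl, Nat.sub_self,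
      Nat.card_of_isEmpty, Nat.cast_zero, mul_zero]
  rw [(Matrix.charpoly_monic _).eq_X_pow_add_sum_Icc (Matrix.charpoly_natDegree_eq_dim _) hcoeff0]
  refine congrArg _ (sum_congr rfl fun j hj => ?_)
  rw [coeff_charpoly_lapDegAdj hloopfree (by grind)]

/-- (All minors matrix tree theorem.) For a finite graph `H` with
`n` vertices, `det(T·Id - Δ(H)) = T^n + Σ_{j=1}^{n-1} (-1)^j b_j(H) T^{n-j}` where
`b_j(H)` is the number of rooted spanning forests of `H` with `n - j` components;
moreover for each `K`, the number of rooted spanning forests with `K` components equals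
`Σ_F mult(F)` over spanning forests `F` with `K` components. -/
theorem stmt13 {V E : Type} [Fintype V] [Fintype E] [DecidableEq V] [DecidableEq E]
    (src tgt : E → V) (hloopfree : ∀ e : E, src e ≠ tgt e)
    (n : ℕ) (hn : n = Fintype.card V) :
    (LapDegAdj src tgt).charpoly
        = Polynomial.X ^ n + ∑ j ∈ Finset.Icc 1 (n - 1),
            Polynomial.C ((-1 : ℤ) ^ j *
                (Nat.card {p : Finset E × Finset V //
                    IsRootedSF src tgt p.1 p.2 ∧ ncomp src tgt p.1 = n - j} : ℤ))
              * Polynomial.X ^ (n - j)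
    ∧ ∀ K : ℕ,
        Nat.card {p : Finset E × Finset V //
            IsRootedSF src tgt p.1 p.2 ∧ ncomp src tgt p.1 = K}
          = ∑ F ∈ Finset.univ.filter
              (fun F : Finset E => IsSpForest src tgt F ∧ ncomp src tgt F = K),
              multF src tgt F :=
  stmt13_general src tgt hloopfree n hn

end Mesh
end
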